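/- arXiv:2210.04281 — 7 statements merged into one kernel-verified Lean document; each statement's English description precedes it below -/
import Mathlib

section
/- Let F be a finite field and V an n-dimensional vector space over F (n ≥ 1) with basis B = {v_1, …, v_n}, and let t = (|F|-1)^n. Then the nonzero component graph IG(V) is isomorphic to the graph join Γ^c(F^n) ∨ K_t, where F^n denotes the product ring F × ⋯ × F (n factors). -/
/-- The skeleton (support) of a vector with respect to a basis. -/
def skel {F V : Type*} [Field F] [AddCommGroup V] [Module F V] {n : ℕ}
    (B : Module.Basis (Fin n) F V) (a : V) : Set (Fin n) := {i | B.repr a i ≠ 0}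

/-- The nonzero component graph IG(V) with respect to a basis: vertices are the
nonzero vectors, and distinct `a, b` are adjacent iff their skeletons intersect. -/
def compGraph {F V : Type*} [Field F] [AddCommGroup V] [Module F V] {n : ℕ}
    (B : Module.Basis (Fin n) F V) : SimpleGraph {a : V // a ≠ 0} where
  Adj a b := a ≠ b ∧ (skel B a.1 ∩ skel B b.1).Nonempty
  symm := ⟨by
    rintro a b ⟨hne, h⟩
    exact ⟨hne.symm, by rwa [Set.inter_comm]⟩⟩
  loopless := ⟨fun a h => h.1 rfl⟩

/-- The join of two graphs: disjoint union together with all cross edges. -/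
def graphJoin {α β : Type*} (G : SimpleGraph α) (H : SimpleGraph β) :
    SimpleGraph (α ⊕ β) where
  Adj x y :=
    match x, y with
    | Sum.inl a, Sum.inl b => G.Adj a b
    | Sum.inr a, Sum.inr b => H.Adj a b
    | _, _ => True
  symm := ⟨by
    rintro (a|a) (b|b) h
    · exact h.symm
    · trivial
    · trivial
    · exact h.symm⟩
  loopless := ⟨by
    rintro (a|a) h
    · exact G.loopless.irrefl a h
    · exact H.loopless.irrefl a h⟩

/-- The zero-divisor graph of a commutative ring: vertices are the nonzero
zero-divisors, distinct `x, y` adjacent iff `x * y = 0`. -/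
def ringZDG (R : Type*) [CommRing R] :
    SimpleGraph {x : R // x ≠ 0 ∧ ∃ y, y ≠ 0 ∧ x * y = 0} where
  Adj x y := x ≠ y ∧ x.1 * y.1 = 0
  symm := ⟨by
    rintro x y ⟨h1, h2⟩
    exact ⟨h1.symm, by rwa [mul_comm]⟩⟩
  loopless := ⟨fun x h => h.1 rfl⟩

/-- For a finite field `F` and an `n`-dimensional `F`-vector space `V`
(`n ≥ 1`) with basis `B`, and `t = (|F|-1)^n`, the nonzero component graph `IG(V)`
is isomorphic to the join `Γᶜ(Fⁿ) ∨ K_t`. -/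
theorem stmt0 {F V : Type*} [Field F] [Fintype F] [AddCommGroup V] [Module F V]
    {n : ℕ} (hn : 1 ≤ n) (B : Module.Basis (Fin n) F V) :
    Nonempty (compGraph B ≃g
      graphJoin ((ringZDG (Fin n → F))ᶜ)
        (⊤ : SimpleGraph (Fin ((Fintype.card F - 1) ^ n)))) := by
  classical
  set R := Fin n → F with hR
  set E : V ≃ₗ[F] (Fin n → F) := B.equivFun with hE
  -- helper facts
  have hmul : ∀ x y : Fin n → F, x * y = 0 ↔ ∀ i, x i = 0 ∨ y i = 0 := by
    intro x y
    constructor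
    · intro h i
      have := congrFun h i
      simpa [mul_eq_zero] using this
    · intro h
      funext i
      rcases h i with h' | h' <;> simp [h']
  have hzd : ∀ x : Fin n → F, x ≠ 0 → ((∃ y : Fin n → F, y ≠ 0 ∧ x * y = 0) ↔ ∃ i, x i = 0) := by
    intro x hx
    constructor
    · rintro ⟨y, hy, hxy⟩
      by_contra hc
      push_neg at hc
      apply hy
      funext i
      rcases (hmul x y).1 hxy i with h | h
      · exact absurd h (hc i)
      · exact h
    · rintro ⟨i, hi⟩
      refine ⟨Pi.single i 1, ?_, ?_⟩
      · intro h
        have := congrFun h i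
        simp [Pi.single_apply] at this
      · rw [hmul]
        intro j
        by_cases hj : j = i
        · subst hj; exact Or.inl hi
        · right; simp [Pi.single_apply, hj]
  have hskel : ∀ a : V, skel B a = {i | E a i ≠ 0} := by
    intro a
    ext i
    simp [skel, hE, Module.Basis.equivFun_apply]
  -- the full-support part
  have hcard : Fintype.card {x : Fin n → F // ∀ i, x i ≠ 0} = (Fintype.card F - 1) ^ n := by
    have e1 : {x : Fin n → F // ∀ i, x i ≠ 0} ≃ (Fin n → {c : F // c ≠ 0}) :=
      Equiv.subtypePiEquivPi (p := fun _ c => c ≠ 0)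
    rw [Fintype.card_congr e1, Fintype.card_fun, Fintype.card_fin]
    congr 1
    have : Fintype.card {c : F // ¬ c = 0} = Fintype.card F - Fintype.card {c : F // c = 0} :=
      Fintype.card_subtype_compl _
    rw [this, Fintype.card_subtype_eq]
  set g : {x : Fin n → F // ∀ i, x i ≠ 0} ≃ Fin ((Fintype.card F - 1) ^ n) :=
    Fintype.equivFinOfCardEq hcard with hg
  have hfullne : ∀ x : Fin n → F, (∀ i, x i ≠ 0) → x ≠ 0 := by
    intro x hx h
    exact hx ⟨0, hn⟩ (by rw [h]; rfl)
  -- forward and backward maps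
  set ZD := {x : Fin n → F // x ≠ 0 ∧ ∃ y, y ≠ 0 ∧ x * y = 0} with hZD
  have hEne : ∀ a : {a : V // a ≠ 0}, E a.1 ≠ 0 := fun a =>
    (LinearEquiv.map_ne_zero_iff E).2 a.2
  set f : {a : V // a ≠ 0} → ZD ⊕ Fin ((Fintype.card F - 1) ^ n) := fun a =>
    if h : ∃ i, E a.1 i = 0 then
      Sum.inl ⟨E a.1, hEne a, (hzd _ (hEne a)).2 h⟩
    else
      Sum.inr (g ⟨E a.1, fun i hi => h ⟨i, hi⟩⟩) with hf
  set finv : ZD ⊕ Fin ((Fintype.card F - 1) ^ n) → {a : V // a ≠ 0} := fun z =>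
    match z with
    | Sum.inl z => ⟨E.symm z.1, (LinearEquiv.map_ne_zero_iff E.symm).2 z.2.1⟩
    | Sum.inr k => ⟨E.symm (g.symm k).1,
        (LinearEquiv.map_ne_zero_iff E.symm).2 (hfullne _ (g.symm k).2)⟩ with hfinv
  have hli : Function.LeftInverse finv f := by
    intro a
    rw [hf]
    dsimp only
    split
    · exact Subtype.ext (by simp [hfinv])
    · rw [hfinv]
      dsimp only
      refine Subtype.ext ?_
      rw [Equiv.symm_apply_apply]
      simp
  have hri : Function.RightInverse finv f := by
    rintro (z | k)
    · rw [hf]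
      dsimp only [hfinv]
      have hcond : ∃ i, E (E.symm z.1) i = 0 := by
        rw [LinearEquiv.apply_symm_apply]
        exact (hzd z.1 z.2.1).1 z.2.2
      rw [dif_pos hcond]
      congr 1
      exact Subtype.ext (by simp [hfinv])
    · rw [hf]
      dsimp only [hfinv]
      have hcond : ¬ ∃ i, E (E.symm (g.symm k).1) i = 0 := by
        rw [LinearEquiv.apply_symm_apply]
        rintro ⟨i, hi⟩
        exact (g.symm k).2 i hi
      rw [dif_neg hcond]
      congr 1
      have : (⟨E (E.symm (g.symm k).1), fun i hi => hcond ⟨i, hi⟩⟩ :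
          {x : Fin n → F // ∀ i, x i ≠ 0}) = g.symm k :=
        Subtype.ext (by simp)
      rw [this, Equiv.apply_symm_apply]
  have hEinj : ∀ a b : {a : V // a ≠ 0}, a ≠ b ↔ E a.1 ≠ E b.1 := by
    intro a b
    constructor
    · intro h hc
      exact h (Subtype.ext (E.injective hc))
    · intro h hc
      exact h (by rw [hc])
  have hinter : ∀ a b : {a : V // a ≠ 0},
      (skel B a.1 ∩ skel B b.1).Nonempty ↔ ∃ i, E a.1 i ≠ 0 ∧ E b.1 i ≠ 0 := by
    intro a b
    rw [hskel, hskel]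
    constructor
    · rintro ⟨i, hi1, hi2⟩; exact ⟨i, hi1, hi2⟩
    · rintro ⟨i, hi1, hi2⟩; exact ⟨i, hi1, hi2⟩
  have hmulne : ∀ x y : Fin n → F, x * y ≠ 0 ↔ ∃ i, x i ≠ 0 ∧ y i ≠ 0 := by
    intro x y
    rw [Ne, hmul]
    push_neg
    rfl
  refine ⟨⟨⟨f, finv, hli, hri⟩, ?_⟩⟩
  intro a b
  rw [iff_comm]
  show (compGraph B).Adj a b ↔ (graphJoin ((ringZDG (Fin n → F))ᶜ) ⊤).Adj (f a) (f b)
  rw [hf]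
  dsimp only
  by_cases ha : ∃ i, E a.1 i = 0 <;> by_cases hb : ∃ i, E b.1 i = 0
  · rw [dif_pos ha, dif_pos hb]
    show _ ↔ ((ringZDG (Fin n → F))ᶜ).Adj _ _
    rw [SimpleGraph.compl_adj]
    constructor
    · rintro ⟨hne, hint⟩
      have hEne' : E a.1 ≠ E b.1 := (hEinj a b).1 hne
      refine ⟨fun hc => hEne' (congrArg Subtype.val hc), ?_⟩
      rintro ⟨-, hprod⟩
      obtain ⟨i, hi1, hi2⟩ := (hinter a b).1 hint
      rcases (hmul _ _).1 hprod i with h | h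
      · exact hi1 h
      · exact hi2 h
    · rintro ⟨hne, hnadj⟩
      have hne' : E a.1 ≠ E b.1 := fun hc => hne (Subtype.ext hc)
      have hprod : E a.1 * E b.1 ≠ 0 := fun hc => hnadj ⟨hne, hc⟩
      exact ⟨(hEinj a b).2 hne', (hinter a b).2 ((hmulne _ _).1 hprod)⟩
  · rw [dif_pos ha, dif_neg hb]
    show _ ↔ True
    simp only [iff_true]
    push_neg at hb
    constructor
    · obtain ⟨i, hi⟩ := ha
      intro hc
      have : E a.1 = E b.1 := by rw [hc]
      exact hb i (this ▸ hi)
    · obtain ⟨i, hi⟩ := Function.ne_iff.1 (hEne a)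
      exact (hinter a b).2 ⟨i, by simpa using hi, hb i⟩
  · rw [dif_neg ha, dif_pos hb]
    show _ ↔ True
    simp only [iff_true]
    push_neg at ha
    constructor
    · obtain ⟨i, hi⟩ := hb
      intro hc
      have : E a.1 = E b.1 := by rw [hc]
      exact ha i (hi ▸ congrFun this i)
    · obtain ⟨i, hi⟩ := Function.ne_iff.1 (hEne b)
      exact (hinter a b).2 ⟨i, ha i, by simpa using hi⟩
  · rw [dif_neg ha, dif_neg hb]
    push_neg at ha hb
    show _ ↔ (⊤ : SimpleGraph (Fin ((Fintype.card F - 1) ^ n))).Adj _ _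
    rw [SimpleGraph.top_adj]
    constructor
    · rintro ⟨hne, -⟩
      intro hc
      have := g.injective hc
      have hEab : E a.1 = E b.1 := congrArg Subtype.val this
      exact (hEinj a b).1 hne hEab
    · intro hgne
      have hne : a ≠ b := by
        intro hc
        exact hgne (by subst hc; rfl)
      exact ⟨hne, (hinter a b).2 ⟨⟨0, hn⟩, ha _, hb _⟩⟩
end

section
/- Let F be a finite field and V an n-dimensional vector space over F with basis B = {v_1, …, v_n}, and let t = (|F|-1)^n. For any choice of the linear orders ≤_I used to construct the lattice 𝕃, the nonzero component graph IG(V) is isomorphic to the graph join G^c(𝕃) ∨ K_t, where G^c(𝕃) is the complement of the zero-divisor graph of 𝕃. -/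
/-- Vectors with proper nonempty skeleton: the middle elements of the lattice 𝕃. -/
def Lmid {F V : Type*} [Field F] [AddCommGroup V] [Module F V] {n : ℕ}
    (B : Module.Basis (Fin n) F V) : Type _ :=
  {a : V // skel B a ≠ ∅ ∧ skel B a ≠ Set.univ}

/-- Carrier of the lattice 𝕃 constructed from `V`: a bottom element `none`
(the 0 of 𝕃), a top element `some none` (the 1 of 𝕃), and the middle elements
`some (some x)` which are the vectors with proper nonempty skeleton. -/
abbrev Lcar {F V : Type*} [Field F] [AddCommGroup V] [Module F V] {n : ℕ}
    (B : Module.Basis (Fin n) F V) : Type _ := Option (Option (Lmid B))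

/-- The order of the lattice 𝕃, parameterized by the chosen family `lo` of linear
orders on each part `V_I`: `0` is least, `1` is greatest, and for `x ∈ V_I`,
`y ∈ V_J`, `x ≤ y` iff `I ⊊ J`, or `I = J` and `x ≤_I y`. -/
def Lle {F V : Type*} [Field F] [AddCommGroup V] [Module F V] {n : ℕ}
    (B : Module.Basis (Fin n) F V)
    (lo : ∀ I : Set (Fin n), {a : V // skel B a = I} → {a : V // skel B a = I} → Prop) :
    Lcar B → Lcar B → Prop
  | none, _ => True
  | some _, none => False
  | some none, some y => y = none
  | some (some _), some none => True
  | some (some x), some (some y) =>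
      skel B x.1 ⊂ skel B y.1 ∨
        ∃ h : skel B x.1 = skel B y.1, lo (skel B x.1) ⟨x.1, rfl⟩ ⟨y.1, h.symm⟩

/-- The zero-divisor graph of a set with a binary relation `le` and a distinguished
least element `b0`: vertices are the elements `a ≠ b0` for which there is some
`b ≠ b0` with lower cone `{a,b}^ℓ = {b0}`; distinct vertices `a, b` are adjacent
iff `{a,b}^ℓ = {b0}`. -/
def relZDG {α : Type*} (le : α → α → Prop) (b0 : α) :
    SimpleGraph {a : α // a ≠ b0 ∧ ∃ b, b ≠ b0 ∧ ∀ c, le c a → le c b → c = b0} where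
  Adj x y := x ≠ y ∧ ∀ c, le c x.1 → le c y.1 → c = b0
  symm := ⟨by
    rintro x y ⟨h1, h2⟩
    exact ⟨h1.symm, fun c ha hb => h2 c hb ha⟩⟩
  loopless := ⟨fun x h => h.1 rfl⟩

section Aux

variable {F V : Type*} [Field F] [AddCommGroup V] [Module F V] {n : ℕ}
  (B : Module.Basis (Fin n) F V)
  (lo : ∀ I : Set (Fin n), {a : V // skel B a = I} → {a : V // skel B a = I} → Prop)

lemma val_eq' {α : Type*} {p : α → Prop} {x y : α} {hx : p x} {hy : p y}
    (h : (⟨x, hx⟩ : Subtype p) = ⟨y, hy⟩) : x = y := congrArg Subtype.val h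

lemma mk_eq_mk' {α : Type*} {p : α → Prop} {x y : α} {hx : p x} {hy : p y}
    (h : x = y) : (⟨x, hx⟩ : Subtype p) = ⟨y, hy⟩ := Subtype.ext h

lemma skel_eq_empty_iff (a : V) : skel B a = ∅ ↔ a = 0 := by
  rw [Set.eq_empty_iff_forall_notMem]
  simp only [skel, Set.mem_setOf_eq, not_not]
  constructor
  · intro h
    exact B.repr.map_eq_zero_iff.mp (Finsupp.ext h)
  · intro h; subst h; simp

lemma skel_basis (i : Fin n) : skel B (B i) = {i} := by
  ext j
  simp only [skel, Set.mem_setOf_eq, Module.Basis.repr_self, Set.mem_singleton_iff,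
    Finsupp.single_apply, ne_eq, ite_eq_right_iff, one_ne_zero, imp_false, not_not]
  exact eq_comm

lemma ne_zero_of_mid (x : Lmid B) : x.1 ≠ 0 :=
  fun h => x.2.1 (by rw [h]; exact (skel_eq_empty_iff B 0).mpr rfl)

variable (hlo : ∀ I : Set (Fin n), I ≠ ∅ → I ≠ Set.univ →
    IsLinearOrder {a : V // skel B a = I} (lo I))

open Classical in
/-- Splitting nonzero vectors into proper-skeleton and full-skeleton ones. -/
noncomputable def splitE [NeZero n] :
    {a : V // a ≠ 0} ≃ (Lmid B ⊕ {a : V // skel B a = Set.univ}) where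
  toFun a :=
    if h : skel B a.1 = Set.univ then Sum.inr ⟨a.1, h⟩
    else Sum.inl ⟨a.1, fun he => a.2 ((skel_eq_empty_iff B a.1).mp he), h⟩
  invFun s :=
    match s with
    | Sum.inl x => ⟨x.1, ne_zero_of_mid B x⟩
    | Sum.inr a => ⟨a.1, fun h0 => by
        have h := (skel_eq_empty_iff B a.1).mpr h0
        rw [a.2] at h
        exact Set.univ_nonempty.ne_empty h⟩
  left_inv a := by
    by_cases h : skel B a.1 = Set.univ <;> simp [h]
  right_inv s := by
    match s with
    | Sum.inl x => simp [dif_neg x.2.2]; rfl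
    | Sum.inr a => simp [dif_pos a.2]

lemma graphJoin_inl_inl {α β : Type*} (G : SimpleGraph α) (H : SimpleGraph β)
    (u v : α) : (graphJoin G H).Adj (Sum.inl u) (Sum.inl v) ↔ G.Adj u v := Iff.rfl

lemma graphJoin_inr_inr {α β : Type*} (G : SimpleGraph α) (H : SimpleGraph β)
    (u v : β) : (graphJoin G H).Adj (Sum.inr u) (Sum.inr v) ↔ H.Adj u v := Iff.rfl

lemma graphJoin_inl_inr {α β : Type*} (G : SimpleGraph α) (H : SimpleGraph β)
    (u : α) (v : β) : (graphJoin G H).Adj (Sum.inl u) (Sum.inr v) := trivial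

lemma graphJoin_inr_inl {α β : Type*} (G : SimpleGraph α) (H : SimpleGraph β)
    (u : β) (v : α) : (graphJoin G H).Adj (Sum.inr u) (Sum.inl v) := trivial


lemma lo_cast {I J : Set (Fin n)} (hIJ : I = J) {a b : V} (ha : skel B a = I)
    (hb : skel B b = J) (h : lo I ⟨a, ha⟩ ⟨b, hb.trans hIJ.symm⟩) :
    lo J ⟨a, ha.trans hIJ⟩ ⟨b, hb⟩ := by subst hIJ; exact h

include hlo

lemma Lle_mid_refl (x : Lmid B) : Lle B lo (some (some x)) (some (some x)) := by
  haveI := hlo (skel B x.1) x.2.1 x.2.2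
  exact Or.inr ⟨rfl, refl_of (lo (skel B x.1)) ⟨x.1, rfl⟩⟩

lemma Lle_mid_of_eq {x y : Lmid B} (h : skel B x.1 = skel B y.1) :
    Lle B lo (some (some x)) (some (some y)) ∨
      Lle B lo (some (some y)) (some (some x)) := by
  haveI := hlo (skel B x.1) x.2.1 x.2.2
  rcases total_of (lo (skel B x.1)) ⟨x.1, rfl⟩ ⟨y.1, h.symm⟩ with hl | hl
  · exact Or.inl (Or.inr ⟨h, hl⟩)
  · exact Or.inr (Or.inr ⟨h.symm, lo_cast B lo h h.symm h hl⟩)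

lemma exists_common (x y : Lmid B) {i : Fin n} (hx : i ∈ skel B x.1)
    (hy : i ∈ skel B y.1) :
    ∃ c : Lcar B, c ≠ none ∧ Lle B lo c (some (some x)) ∧
      Lle B lo c (some (some y)) := by
  by_cases hxy : skel B x.1 = skel B y.1
  · rcases Lle_mid_of_eq B lo hlo hxy with h | h
    · exact ⟨some (some x), by simp, Lle_mid_refl B lo hlo x, h⟩
    · exact ⟨some (some y), by simp, h, Lle_mid_refl B lo hlo y⟩
  · by_cases h1 : skel B x.1 = {i}
    · refine ⟨some (some x), by simp, Lle_mid_refl B lo hlo x, Or.inl ?_⟩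
      rw [h1]
      exact ssubset_of_subset_of_ne (Set.singleton_subset_iff.mpr hy)
        (fun hh => hxy (h1.trans hh))
    · by_cases h2 : skel B y.1 = {i}
      · refine ⟨some (some y), by simp, Or.inl ?_, Lle_mid_refl B lo hlo y⟩
        rw [h2]
        exact ssubset_of_subset_of_ne (Set.singleton_subset_iff.mpr hx)
          (fun hh => h1 hh.symm)
      · have hsk := skel_basis B i
        have hne : skel B (B i) ≠ ∅ := by rw [hsk]; simp
        have hnu : skel B (B i) ≠ Set.univ := by
          rw [hsk]; intro hu
          apply h1
          have hsub : skel B x.1 ⊆ {i} := by rw [hu]; exact Set.subset_univ _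
          exact Set.Subset.antisymm hsub (Set.singleton_subset_iff.mpr hx)
        have c1 : skel B (B i) ⊂ skel B x.1 := by
          rw [hsk]
          exact ssubset_of_subset_of_ne (Set.singleton_subset_iff.mpr hx)
            (fun hh => h1 hh.symm)
        have c2 : skel B (B i) ⊂ skel B y.1 := by
          rw [hsk]
          exact ssubset_of_subset_of_ne (Set.singleton_subset_iff.mpr hy)
            (fun hh => h2 hh.symm)
        exact ⟨some (some ⟨B i, hne, hnu⟩), by simp, Or.inl c1, Or.inl c2⟩

lemma cone_iff (x y : Lmid B) :
    (∀ c, Lle B lo c (some (some x)) → Lle B lo c (some (some y)) → c = none)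
      ↔ skel B x.1 ∩ skel B y.1 = ∅ := by
  constructor
  · intro h
    by_contra hne
    obtain ⟨i, hix, hiy⟩ := Set.nonempty_iff_ne_empty.mpr hne
    obtain ⟨c, hc0, hcx, hcy⟩ := exists_common B lo hlo x y hix hiy
    exact hc0 (h c hcx hcy)
  · intro h c hcx hcy
    match c with
    | none => rfl
    | some none => exact (Option.some_ne_none _ hcx).elim
    | some (some z) =>
      exfalso
      have hzx : skel B z.1 ⊆ skel B x.1 := by
        rcases hcx with h' | ⟨h', _⟩
        · exact h'.subset
        · exact h'.subset
      have hzy : skel B z.1 ⊆ skel B y.1 := by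
        rcases hcy with h' | ⟨h', _⟩
        · exact h'.subset
        · exact h'.subset
      have hsub := Set.subset_inter hzx hzy
      rw [h] at hsub
      exact z.2.1 (Set.subset_empty_iff.mp hsub)

lemma mem_vert (x : Lmid B) :
    (some (some x) : Lcar B) ≠ none ∧ ∃ b, b ≠ none ∧
      ∀ c, Lle B lo c (some (some x)) → Lle B lo c b → c = none := by
  refine ⟨by simp, ?_⟩
  obtain ⟨i, hi⟩ := (Set.ne_univ_iff_exists_notMem _).mp x.2.2
  have hsk := skel_basis B i
  have hne : skel B (B i) ≠ ∅ := by rw [hsk]; simp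
  have hnu : skel B (B i) ≠ Set.univ := by
    rw [hsk]; intro hu
    obtain ⟨j, hj⟩ := Set.nonempty_iff_ne_empty.mpr x.2.1
    have hji : j ∈ ({i} : Set (Fin n)) := by rw [hu]; trivial
    have hji' : j = i := Set.mem_singleton_iff.mp hji
    subst hji'
    exact hi hj
  refine ⟨some (some ⟨B i, hne, hnu⟩), by simp, ?_⟩
  apply (cone_iff B lo hlo x ⟨B i, hne, hnu⟩).mpr
  show skel B x.1 ∩ skel B (B i) = ∅
  rw [hsk]
  exact Set.inter_singleton_eq_empty.mpr hi

lemma vert_shape (a : Lcar B)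
    (ha : a ≠ none ∧ ∃ b, b ≠ none ∧
      ∀ c, Lle B lo c a → Lle B lo c b → c = none) :
    ∃ x : Lmid B, a = some (some x) := by
  obtain ⟨ha0, b, hb0, hc⟩ := ha
  match a, ha0 with
  | some none, _ =>
    exfalso
    match b, hb0 with
    | some none, _ => exact Option.some_ne_none _ (hc (some none) rfl rfl)
    | some (some y), _ =>
      exact Option.some_ne_none _
        (hc (some (some y)) trivial (Lle_mid_refl B lo hlo y))
  | some (some x), _ => exact ⟨x, rfl⟩

end Aux

section Aux2

variable {F V : Type*} [Field F] [AddCommGroup V] [Module F V] {n : ℕ}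
  (B : Module.Basis (Fin n) F V)
  (lo : ∀ I : Set (Fin n), {a : V // skel B a = I} → {a : V // skel B a = I} → Prop)
  (hlo : ∀ I : Set (Fin n), I ≠ ∅ → I ≠ Set.univ →
    IsLinearOrder {a : V // skel B a = I} (lo I))

/-- The middle elements are exactly the zero-divisor vertices of 𝕃. -/
noncomputable def vertE :
    Lmid B ≃ {a : Lcar B // a ≠ none ∧ ∃ b, b ≠ none ∧
      ∀ c, Lle B lo c a → Lle B lo c b → c = none} :=
  Equiv.ofBijective (fun x => ⟨some (some x), mem_vert B lo hlo x⟩)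
    ⟨fun x y h => by
        have := congrArg Subtype.val h
        simpa using this,
     fun v => by
        obtain ⟨x, hx⟩ := vert_shape B lo hlo v.1 v.2
        exact ⟨x, Subtype.ext hx.symm⟩⟩

lemma vertE_apply (x : Lmid B) :
    (vertE B lo hlo x).1 = some (some x) := rfl

end Aux2

/-- For any choice of the linear orders `≤_I` used to construct the
lattice 𝕃, the nonzero component graph `IG(V)` is isomorphic to the join
`Gᶜ(𝕃) ∨ K_t`, where `t = (|F|-1)^n` and `Gᶜ(𝕃)` is the complement of the
zero-divisor graph of 𝕃. -/
theorem stmt1 {F V : Type*} [Field F] [Fintype F] [AddCommGroup V] [Module F V]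
    {n : ℕ} (hn : 1 ≤ n) (B : Module.Basis (Fin n) F V)
    (lo : ∀ I : Set (Fin n), {a : V // skel B a = I} → {a : V // skel B a = I} → Prop)
    (hlo : ∀ I : Set (Fin n), I ≠ ∅ → I ≠ Set.univ →
      IsLinearOrder {a : V // skel B a = I} (lo I)) :
    Nonempty (compGraph B ≃g
      graphJoin ((relZDG (Lle B lo) (none : Lcar B))ᶜ)
        (⊤ : SimpleGraph (Fin ((Fintype.card F - 1) ^ n)))) := by
  classical
  haveI : NeZero n := ⟨by omega⟩
  -- an equivalence between full-skeleton vectors and `Fin ((card F - 1)^n)`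
  obtain ⟨fE⟩ : Nonempty
      ({a : V // skel B a = Set.univ} ≃ Fin ((Fintype.card F - 1) ^ n)) := by
    have E1 : {a : V // skel B a = Set.univ} ≃ (Fin n → {x : F // x ≠ 0}) :=
    { toFun := fun a i => ⟨B.repr a.1 i, by
        have h : i ∈ skel B a.1 := by rw [a.2]; trivial
        exact h⟩
      invFun := fun f => ⟨B.repr.symm (Finsupp.equivFunOnFinite.symm fun i => (f i).1), by
        ext i
        simp only [skel, Set.mem_setOf_eq, Set.mem_univ, iff_true,
          LinearEquiv.apply_symm_apply]
        simpa using (f i).2⟩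
      left_inv := fun a => Subtype.ext (by
        simp only []
        have h : (Finsupp.equivFunOnFinite.symm fun i => B.repr a.1 i) = B.repr a.1 := by
          ext i; simp [Finsupp.equivFunOnFinite]
        rw [h, LinearEquiv.symm_apply_apply])
      right_inv := fun f => funext fun i => Subtype.ext (by
        simp [Finsupp.equivFunOnFinite]) }
    haveI : Fintype {a : V // skel B a = Set.univ} := Fintype.ofEquiv _ E1.symm
    refine ⟨Fintype.equivFinOfCardEq ?_⟩
    rw [Fintype.card_congr E1, Fintype.card_fun, Fintype.card_fin]
    congr 1
    rw [Fintype.card_subtype_compl, Fintype.card_subtype_eq]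
  refine ⟨⟨(splitE B).trans (Equiv.sumCongr (vertE B lo hlo) fE), ?_⟩⟩
  intro a b
  simp only [Equiv.trans_apply, Equiv.sumCongr_apply]
  by_cases ha : skel B a.1 = Set.univ <;> by_cases hb : skel B b.1 = Set.univ
  · -- both full skeleton
    have sa : splitE B a = Sum.inr ⟨a.1, ha⟩ := by simp [splitE, dif_pos ha]
    have sb : splitE B b = Sum.inr ⟨b.1, hb⟩ := by simp [splitE, dif_pos hb]
    rw [sa, sb]
    simp only [Sum.map_inr]
    rw [graphJoin_inr_inr, SimpleGraph.top_adj]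
    show _ ↔ a ≠ b ∧ (skel B a.1 ∩ skel B b.1).Nonempty
    constructor
    · intro h
      refine ⟨fun he => h (congrArg fE (mk_eq_mk' (congrArg Subtype.val he))), ?_⟩
      rw [ha, hb, Set.univ_inter]
      exact Set.univ_nonempty
    · rintro ⟨h1, -⟩ h
      exact h1 (Subtype.ext (val_eq' (fE.injective h)))
  · -- a full, b proper
    have pb : skel B b.1 ≠ ∅ := fun he => b.2 ((skel_eq_empty_iff B b.1).mp he)
    have sa : splitE B a = Sum.inr ⟨a.1, ha⟩ := by simp [splitE, dif_pos ha]
    have sb : splitE B b = Sum.inl ⟨b.1, pb, hb⟩ := by simp [splitE, dif_neg hb]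
    rw [sa, sb]
    simp only [Sum.map_inr, Sum.map_inl]
    constructor
    · intro _
      refine ⟨fun he => hb (by rw [← congrArg Subtype.val he]; exact ha), ?_⟩
      rw [ha, Set.univ_inter]
      exact Set.nonempty_iff_ne_empty.mpr pb
    · intro _
      exact graphJoin_inr_inl _ _ _ _
  · -- a proper, b full
    have pa : skel B a.1 ≠ ∅ := fun he => a.2 ((skel_eq_empty_iff B a.1).mp he)
    have sa : splitE B a = Sum.inl ⟨a.1, pa, ha⟩ := by simp [splitE, dif_neg ha]
    have sb : splitE B b = Sum.inr ⟨b.1, hb⟩ := by simp [splitE, dif_pos hb]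
    rw [sa, sb]
    simp only [Sum.map_inr, Sum.map_inl]
    constructor
    · intro _
      refine ⟨fun he => ha (by rw [congrArg Subtype.val he]; exact hb), ?_⟩
      obtain ⟨i, hi⟩ := Set.nonempty_iff_ne_empty.mpr pa
      exact ⟨i, hi, by rw [hb]; trivial⟩
    · intro _
      exact graphJoin_inl_inr _ _ _ _
  · -- both proper skeleton
    have pa : skel B a.1 ≠ ∅ := fun he => a.2 ((skel_eq_empty_iff B a.1).mp he)
    have pb : skel B b.1 ≠ ∅ := fun he => b.2 ((skel_eq_empty_iff B b.1).mp he)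
    have sa : splitE B a = Sum.inl (⟨a.1, pa, ha⟩ : Lmid B) := by simp [splitE, dif_neg ha]; rfl
    have sb : splitE B b = Sum.inl (⟨b.1, pb, hb⟩ : Lmid B) := by simp [splitE, dif_neg hb]; rfl
    rw [sa, sb]
    show (graphJoin _ _).Adj (Sum.inl (vertE B lo hlo ⟨a.1, pa, ha⟩)) (Sum.inl (vertE B lo hlo ⟨b.1, pb, hb⟩)) ↔ _
    rw [graphJoin_inl_inl, SimpleGraph.compl_adj]
    have hxy : (⟨a.1, pa, ha⟩ : Lmid B) = ⟨b.1, pb, hb⟩ ↔ a = b :=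
      ⟨fun h => Subtype.ext (val_eq' h),
       fun h => mk_eq_mk' (congrArg Subtype.val h)⟩
    have hvne : vertE B lo hlo ⟨a.1, pa, ha⟩ ≠ vertE B lo hlo ⟨b.1, pb, hb⟩ ↔ a ≠ b :=
      Iff.trans ((vertE B lo hlo).injective.ne_iff) (not_congr hxy)
    show _ ↔ a ≠ b ∧ (skel B a.1 ∩ skel B b.1).Nonempty
    constructor
    · rintro ⟨h1, h2⟩
      refine ⟨hvne.mp h1, ?_⟩
      rw [Set.nonempty_iff_ne_empty]
      intro hemp
      exact h2 ⟨h1, (cone_iff B lo hlo ⟨a.1, pa, ha⟩ ⟨b.1, pb, hb⟩).mpr hemp⟩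
    · rintro ⟨h1, h2⟩
      refine ⟨hvne.mpr h1, fun hadj => ?_⟩
      exact h2.ne_empty ((cone_iff B lo hlo ⟨a.1, pa, ha⟩ ⟨b.1, pb, hb⟩).mp hadj.2)
end

section
/- Let F be a finite field and V an n-dimensional vector space over F with basis B = {v_1, …, v_n}. For any choice of the linear orders ≤_I, the poset 𝕃 constructed from V is a bounded lattice which is both 0-distributive and 1-distributive. -/
set_option linter.unusedSectionVars false
set_option maxHeartbeats 1000000

section Aux

lemma exists_rel_max' {α : Type*} [Finite α] (r : α → α → Prop) (hr : IsLinearOrder α r)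
    (a0 : α) : ∃ m, ∀ x, r x m := by
  classical
  cases nonempty_fintype α
  have htr := hr.toIsPartialOrder.toIsPreorder.toIsTrans
  have hre := hr.toIsPartialOrder.toIsPreorder.toRefl
  have hto := hr.toTotal
  have H : ∀ s : Finset α, s.Nonempty → ∃ m ∈ s, ∀ x ∈ s, r x m := by
    intro s hs
    induction s using Finset.cons_induction with
    | empty => simp at hs
    | cons a s ha ih =>
      rcases s.eq_empty_or_nonempty with rfl | hne
      · exact ⟨a, by simp, by simpa using hre.refl a⟩
      · obtain ⟨m, hm, hmax⟩ := ih hne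
        rcases hto.total a m with h | h
        · refine ⟨m, Finset.mem_cons_of_mem hm, ?_⟩
          intro x hx; rcases Finset.mem_cons.1 hx with rfl | hx
          · exact h
          · exact hmax x hx
        · refine ⟨a, Finset.mem_cons_self a s, ?_⟩
          intro x hx; rcases Finset.mem_cons.1 hx with rfl | hx
          · exact hre.refl x
          · exact htr.trans _ _ _ (hmax x hx) h
  obtain ⟨m, _, hm⟩ := H Finset.univ ⟨a0, Finset.mem_univ _⟩
  exact ⟨m, fun x => hm x (Finset.mem_univ x)⟩

lemma exists_rel_min' {α : Type*} [Finite α] (r : α → α → Prop) (hr : IsLinearOrder α r)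
    (a0 : α) : ∃ m, ∀ x, r m x := by
  have : IsLinearOrder α (fun a b => r b a) :=
    { refl := hr.toIsPartialOrder.toIsPreorder.toRefl.refl
      trans := fun a b c h1 h2 => hr.toIsPartialOrder.toIsPreorder.toIsTrans.trans _ _ _ h2 h1
      antisymm := fun a b h1 h2 => hr.toIsPartialOrder.toAntisymm.antisymm _ _ h2 h1
      total := fun a b => (hr.toTotal.total b a) }
  exact exists_rel_max' _ this a0

variable {F V : Type*} [Field F] [Fintype F] [AddCommGroup V] [Module F V] {n : ℕ}
  (B : Module.Basis (Fin n) F V)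
  (lo : ∀ I : Set (Fin n), {a : V // skel B a = I} → {a : V // skel B a = I} → Prop)
  (hlo : ∀ I : Set (Fin n), I ≠ ∅ → I ≠ Set.univ →
      IsLinearOrder {a : V // skel B a = I} (lo I))

lemma exists_skel (I : Set (Fin n)) : ∃ a : V, skel B a = I := by
  classical
  refine ⟨∑ i ∈ Finset.univ.filter (· ∈ I), B i, ?_⟩
  ext j
  simp [skel, Finsupp.single_apply, Finset.sum_ite_eq']

lemma lo_cast_s3 {I J : Set (Fin n)} (h : I = J) (x y : {a : V // skel B a = I}) :
    lo I x y ↔ lo J ⟨x.1, x.2.trans h⟩ ⟨y.1, y.2.trans h⟩ := by subst h; rfl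

lemma mid_le_mid {x y : Lmid B} {I : Set (Fin n)} (hx : skel B x.1 = I) (hy : skel B y.1 = I)
    (h : lo I ⟨x.1, hx⟩ ⟨y.1, hy⟩) : Lle B lo (some (some x)) (some (some y)) :=
  Or.inr ⟨hx.trans hy.symm, (lo_cast_s3 B lo hx.symm ⟨x.1, hx⟩ ⟨y.1, hy⟩).mp h⟩

lemma mid_le_mid_elim {x y : Lmid B} {I : Set (Fin n)}
    (hx : skel B x.1 = I) (hy : skel B y.1 = I)
    (h : Lle B lo (some (some x)) (some (some y))) :
    lo I ⟨x.1, hx⟩ ⟨y.1, hy⟩ := by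
  rcases h with h | ⟨h', h⟩
  · exact absurd (hx.trans hy.symm) h.ne
  · exact (lo_cast_s3 B lo hx ⟨x.1, rfl⟩ ⟨y.1, h'.symm⟩).mp h

lemma skel_mono {x y : Lmid B} (h : Lle B lo (some (some x)) (some (some y))) :
    skel B x.1 ⊆ skel B y.1 := by
  rcases h with h | ⟨h, -⟩
  · exact h.subset
  · exact h ▸ subset_rfl

include hlo in
lemma Lle_refl : ∀ x : Lcar B, Lle B lo x x
  | none => trivial
  | some none => rfl
  | some (some x) =>
      Or.inr ⟨rfl, (hlo _ x.2.1 x.2.2).toIsPartialOrder.toIsPreorder.toRefl.refl _⟩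

lemma Lle_le_none : ∀ {x : Lcar B}, Lle B lo x none → x = none := by
  rintro (_ | (_ | x)) h
  · rfl
  · exact h.elim
  · exact h.elim

lemma Lle_top_le : ∀ {x : Lcar B}, Lle B lo (some none) x → x = some none := by
  rintro (_ | (_ | x)) h
  · exact h.elim
  · rfl
  · exact absurd h (Option.some_ne_none _)

lemma Lle_le_top : ∀ x : Lcar B, Lle B lo x (some none)
  | none => trivial
  | some none => rfl
  | some (some _) => trivial

include hlo in
lemma Lle_trans : ∀ x y z : Lcar B, Lle B lo x y → Lle B lo y z → Lle B lo x z := by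
  intro x y z hxy hyz
  cases x with
  | none => trivial
  | some x' => cases x' with
    | none =>
      obtain rfl := Lle_top_le B lo hxy
      obtain rfl := Lle_top_le B lo hyz
      rfl
    | some a => cases y with
      | none => exact hxy.elim
      | some y' => cases y' with
        | none =>
          obtain rfl := Lle_top_le B lo hyz
          trivial
        | some b => cases z with
          | none => exact hyz.elim
          | some z' => cases z' with
            | none => trivial
            | some c =>
              rcases hxy with h1 | ⟨h1, l1⟩ <;> rcases hyz with h2 | ⟨h2, l2⟩
              · exact Or.inl (h1.trans h2)
              · exact Or.inl (h2 ▸ h1)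
              · exact Or.inl (h1 ▸ h2)
              · refine mid_le_mid B lo (I := skel B a.1) rfl (h1.trans h2).symm ?_
                have l2' : lo (skel B a.1) ⟨b.1, h1.symm⟩ ⟨c.1, (h1.trans h2).symm⟩ :=
                  (lo_cast_s3 B lo h1.symm ⟨b.1, rfl⟩ ⟨c.1, h2.symm⟩).mp l2
                exact (hlo _ a.2.1 a.2.2).toIsPartialOrder.toIsPreorder.toIsTrans.trans _ _ _
                  (mid_le_mid_elim B lo rfl h1.symm (Or.inr ⟨h1, l1⟩)) l2'

include hlo in
lemma Lle_antisymm : ∀ x y : Lcar B, Lle B lo x y → Lle B lo y x → x = y := by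
  intro x y hxy hyx
  cases x with
  | none => exact (Lle_le_none B lo hyx).symm
  | some x' => cases x' with
    | none => exact (Lle_top_le B lo hxy).symm
    | some a => cases y with
      | none => exact hxy.elim
      | some y' => cases y' with
        | none => exact absurd hyx (Option.some_ne_none _)
        | some b =>
          rcases hxy with h1 | ⟨h1, l1⟩
          · rcases hyx with h2 | ⟨h2, l2⟩
            · exact absurd (h1.trans h2) (ssubset_irrefl _)
            · exact absurd h2.symm h1.ne
          · have l2 := mid_le_mid_elim B lo (x := b) (y := a) h1.symm rfl hyx
            have heq := (hlo _ a.2.1 a.2.2).toIsPartialOrder.toAntisymm.antisymm _ _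
              (mid_le_mid_elim B lo (I := skel B a.1) rfl h1.symm (Or.inr ⟨h1, l1⟩)) l2
            have hv := Subtype.ext_iff.mp heq
            exact congrArg (fun v => some (some v)) (Subtype.ext hv)

include hlo in
/-- the `lo`-maximum of `V_I` is an upper bound for everything with skeleton inside `I`. -/
lemma exists_lmax (I : Set (Fin n)) (h1 : I ≠ ∅) (h2 : I ≠ Set.univ) :
    ∃ m : Lmid B, skel B m.1 = I ∧
      ∀ x : Lmid B, skel B x.1 ⊆ I → Lle B lo (some (some x)) (some (some m)) := by
  haveI : Finite V := Finite.of_equiv _ B.equivFun.symm.toEquiv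
  obtain ⟨a, ha⟩ := exists_skel B I
  obtain ⟨m, hm⟩ := exists_rel_max' (lo I) (hlo I h1 h2) ⟨a, ha⟩
  refine ⟨⟨m.1, m.2.symm ▸ h1, m.2.symm ▸ h2⟩, m.2, ?_⟩
  intro x hx
  by_cases he : skel B x.1 = I
  · exact mid_le_mid B lo he m.2 (hm ⟨x.1, he⟩)
  · refine Or.inl ?_
    have : skel B (⟨m.1, m.2.symm ▸ h1, m.2.symm ▸ h2⟩ : Lmid B).1 = I := m.2
    rw [this]
    exact hx.ssubset_of_ne he

include hlo in
/-- the `lo`-minimum of `V_I` is a lower bound for everything with skeleton containing `I`. -/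
lemma exists_lmin (I : Set (Fin n)) (h1 : I ≠ ∅) (h2 : I ≠ Set.univ) :
    ∃ m : Lmid B, skel B m.1 = I ∧
      ∀ x : Lmid B, I ⊆ skel B x.1 → Lle B lo (some (some m)) (some (some x)) := by
  haveI : Finite V := Finite.of_equiv _ B.equivFun.symm.toEquiv
  obtain ⟨a, ha⟩ := exists_skel B I
  obtain ⟨m, hm⟩ := exists_rel_min' (lo I) (hlo I h1 h2) ⟨a, ha⟩
  refine ⟨⟨m.1, m.2.symm ▸ h1, m.2.symm ▸ h2⟩, m.2, ?_⟩
  intro x hx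
  by_cases he : skel B x.1 = I
  · exact mid_le_mid B lo m.2 he (hm ⟨x.1, he⟩)
  · refine Or.inl ?_
    have : skel B (⟨m.1, m.2.symm ▸ h1, m.2.symm ▸ h2⟩ : Lmid B).1 = I := m.2
    rw [this]
    exact hx.ssubset_of_ne (fun h => he h.symm)

include hlo in
lemma disj_of_meet_none {a b : Lmid B}
    (h : ∀ z, Lle B lo z (some (some a)) → Lle B lo z (some (some b)) → z = none) :
    skel B a.1 ∩ skel B b.1 = ∅ := by
  by_contra hne
  have hIuniv : skel B a.1 ∩ skel B b.1 ≠ Set.univ := fun h' =>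
    a.2.2 (Set.eq_univ_of_univ_subset (le_of_eq_of_le h'.symm Set.inter_subset_left))
  obtain ⟨w, hwI, hwmin⟩ := exists_lmin B lo hlo _ hne hIuniv
  have h1 := hwmin a Set.inter_subset_left
  have h2 := hwmin b Set.inter_subset_right
  exact absurd (h _ h1 h2) (Option.some_ne_none _)

include hlo in
lemma union_univ_of_join_top {a b : Lmid B}
    (h : ∀ z, Lle B lo (some (some a)) z → Lle B lo (some (some b)) z → z = some none) :
    skel B a.1 ∪ skel B b.1 = Set.univ := by
  by_contra hne
  have hIne : skel B a.1 ∪ skel B b.1 ≠ ∅ := fun h' =>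
    a.2.1 (Set.subset_eq_empty Set.subset_union_left h')
  obtain ⟨w, hwI, hwmax⟩ := exists_lmax B lo hlo _ hIne hne
  have h1 := hwmax a Set.subset_union_left
  have h2 := hwmax b Set.subset_union_right
  have := h _ h1 h2
  simp at this

end Aux

/-- For any choice of the linear orders `≤_I`, the poset 𝕃 constructed
from `V` is a bounded lattice (a partial order with least element 0 = `none`,
greatest element 1 = `some none`, and binary meets and joins) which is both
0-distributive and 1-distributive (stated via greatest lower bounds / least upper
bounds: `a ⊓ b = 0` means the only common lower bound of `a, b` is `0`, and
`a ⊔ b = 1` means the only common upper bound of `a, b` is `1`). -/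
theorem stmt3 {F V : Type*} [Field F] [Fintype F] [AddCommGroup V] [Module F V]
    {n : ℕ} (B : Module.Basis (Fin n) F V)
    (lo : ∀ I : Set (Fin n), {a : V // skel B a = I} → {a : V // skel B a = I} → Prop)
    (hlo : ∀ I : Set (Fin n), I ≠ ∅ → I ≠ Set.univ →
      IsLinearOrder {a : V // skel B a = I} (lo I)) :
    -- 𝕃 is a partial order
    IsPartialOrder (Lcar B) (Lle B lo) ∧
    -- with least element 0 and greatest element 1
    (∀ x, Lle B lo none x) ∧ (∀ x, Lle B lo x (some none)) ∧
    -- every pair has a meet (greatest lower bound)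
    (∀ x y, ∃ m, Lle B lo m x ∧ Lle B lo m y ∧
      ∀ c, Lle B lo c x → Lle B lo c y → Lle B lo c m) ∧
    -- every pair has a join (least upper bound)
    (∀ x y, ∃ s, Lle B lo x s ∧ Lle B lo y s ∧
      ∀ c, Lle B lo x c → Lle B lo y c → Lle B lo s c) ∧
    -- 0-distributive: a ∧ b = 0 and a ∧ c = 0 imply a ∧ (b ∨ c) = 0
    (∀ a b c s,
      (Lle B lo b s ∧ Lle B lo c s ∧ ∀ u, Lle B lo b u → Lle B lo c u → Lle B lo s u) →
      (∀ z, Lle B lo z a → Lle B lo z b → z = none) →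
      (∀ z, Lle B lo z a → Lle B lo z c → z = none) →
      (∀ z, Lle B lo z a → Lle B lo z s → z = none)) ∧
    -- 1-distributive: a ∨ b = 1 and a ∨ c = 1 imply a ∨ (b ∧ c) = 1
    (∀ a b c m,
      (Lle B lo m b ∧ Lle B lo m c ∧ ∀ u, Lle B lo u b → Lle B lo u c → Lle B lo u m) →
      (∀ z, Lle B lo a z → Lle B lo b z → z = some none) →
      (∀ z, Lle B lo a z → Lle B lo c z → z = some none) →
      (∀ z, Lle B lo a z → Lle B lo m z → z = some none)) := by
  classical
  refine ⟨{ refl := Lle_refl B lo hlo, trans := Lle_trans B lo hlo,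
            antisymm := Lle_antisymm B lo hlo },
    fun _ => trivial, Lle_le_top B lo, ?_, ?_, ?_, ?_⟩
  -- meets
  · intro x y
    cases x with
    | none => exact ⟨none, trivial, trivial, fun c h1 _ => h1⟩
    | some x' => cases x' with
      | none => exact ⟨y, Lle_le_top B lo y, Lle_refl B lo hlo y, fun c _ h2 => h2⟩
      | some a => cases y with
        | none => exact ⟨none, trivial, trivial, fun c _ h2 => h2⟩
        | some y' => cases y' with
          | none => exact ⟨some (some a), Lle_refl B lo hlo _, trivial, fun c h1 _ => h1⟩
          | some b =>
            by_cases hxy : Lle B lo (some (some a)) (some (some b))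
            · exact ⟨some (some a), Lle_refl B lo hlo _, hxy, fun c h1 _ => h1⟩
            by_cases hyx : Lle B lo (some (some b)) (some (some a))
            · exact ⟨some (some b), hyx, Lle_refl B lo hlo _, fun c _ h2 => h2⟩
            have hne : skel B a.1 ≠ skel B b.1 := by
              intro h
              rcases (hlo _ a.2.1 a.2.2).toTotal.total ⟨a.1, rfl⟩ ⟨b.1, h.symm⟩ with ht | ht
              · exact hxy (mid_le_mid B lo rfl h.symm ht)
              · exact hyx (mid_le_mid B lo h.symm rfl ht)
            by_cases hI : skel B a.1 ∩ skel B b.1 = ∅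
            · refine ⟨none, trivial, trivial, ?_⟩
              rintro (_ | (_ | c)) h1 h2
              · trivial
              · exact absurd h1 (Option.some_ne_none _)
              · exfalso
                refine c.2.1 (Set.subset_eq_empty ?_ hI)
                exact Set.subset_inter (skel_mono B lo h1) (skel_mono B lo h2)
            · have hIuniv : skel B a.1 ∩ skel B b.1 ≠ Set.univ := fun h' =>
                a.2.2 (Set.eq_univ_of_univ_subset (le_of_eq_of_le h'.symm Set.inter_subset_left))
              obtain ⟨w, hwI, hwmax⟩ := exists_lmax B lo hlo _ hI hIuniv
              have hna : skel B a.1 ∩ skel B b.1 ≠ skel B a.1 := by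
                intro h
                rw [Set.inter_eq_left] at h
                exact hxy (Or.inl (h.ssubset_of_ne hne))
              have hnb : skel B a.1 ∩ skel B b.1 ≠ skel B b.1 := by
                intro h
                rw [Set.inter_eq_right] at h
                exact hyx (Or.inl (h.ssubset_of_ne (fun hh => hne hh.symm)))
              refine ⟨some (some w),
                Or.inl (by rw [hwI]; exact Set.inter_subset_left.ssubset_of_ne hna),
                Or.inl (by rw [hwI]; exact Set.inter_subset_right.ssubset_of_ne hnb), ?_⟩
              rintro (_ | (_ | c)) h1 h2
              · trivial
              · exact absurd h1 (Option.some_ne_none _)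
              · exact hwmax c (Set.subset_inter (skel_mono B lo h1) (skel_mono B lo h2))
  -- joins
  · intro x y
    cases x with
    | none => exact ⟨y, trivial, Lle_refl B lo hlo y, fun c _ h2 => h2⟩
    | some x' => cases x' with
      | none => exact ⟨some none, rfl, Lle_le_top B lo y, fun c h1 _ => h1⟩
      | some a => cases y with
        | none => exact ⟨some (some a), Lle_refl B lo hlo _, trivial, fun c h1 _ => h1⟩
        | some y' => cases y' with
          | none => exact ⟨some none, trivial, rfl, fun c _ h2 => h2⟩
          | some b =>
            by_cases hxy : Lle B lo (some (some a)) (some (some b))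
            · exact ⟨some (some b), hxy, Lle_refl B lo hlo _, fun c _ h2 => h2⟩
            by_cases hyx : Lle B lo (some (some b)) (some (some a))
            · exact ⟨some (some a), Lle_refl B lo hlo _, hyx, fun c h1 _ => h1⟩
            have hne : skel B a.1 ≠ skel B b.1 := by
              intro h
              rcases (hlo _ a.2.1 a.2.2).toTotal.total ⟨a.1, rfl⟩ ⟨b.1, h.symm⟩ with ht | ht
              · exact hxy (mid_le_mid B lo rfl h.symm ht)
              · exact hyx (mid_le_mid B lo h.symm rfl ht)
            by_cases hI : skel B a.1 ∪ skel B b.1 = Set.univ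
            · refine ⟨some none, trivial, trivial, ?_⟩
              rintro (_ | (_ | c)) h1 h2
              · exact h1.elim
              · rfl
              · exfalso
                exact c.2.2 (Set.eq_univ_of_univ_subset (le_of_eq_of_le hI.symm
                  (Set.union_subset (skel_mono B lo h1) (skel_mono B lo h2))))
            · have hIne : skel B a.1 ∪ skel B b.1 ≠ ∅ := fun h' =>
                a.2.1 (Set.subset_eq_empty Set.subset_union_left h')
              obtain ⟨w, hwI, hwmin⟩ := exists_lmin B lo hlo _ hIne hI
              have hna : skel B a.1 ≠ skel B a.1 ∪ skel B b.1 := by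
                intro h
                rw [eq_comm, Set.union_eq_left] at h
                exact hyx (Or.inl (h.ssubset_of_ne (fun hh => hne hh.symm)))
              have hnb : skel B b.1 ≠ skel B a.1 ∪ skel B b.1 := by
                intro h
                rw [eq_comm, Set.union_eq_right] at h
                exact hxy (Or.inl (h.ssubset_of_ne hne))
              refine ⟨some (some w),
                Or.inl (by rw [hwI]; exact Set.subset_union_left.ssubset_of_ne hna),
                Or.inl (by rw [hwI]; exact Set.subset_union_right.ssubset_of_ne hnb), ?_⟩
              rintro (_ | (_ | c)) h1 h2
              · exact h1.elim
              · trivial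
              · exact hwmin c (Set.union_subset (skel_mono B lo h1) (skel_mono B lo h2))
  -- 0-distributivity
  · intro a b c s hs h1 h2 z hza hzs
    cases a with
    | none => exact Lle_le_none B lo hza
    | some a' => cases a' with
      | none =>
        obtain rfl : b = none := h1 b (Lle_le_top B lo b) (Lle_refl B lo hlo b)
        obtain rfl : c = none := h2 c (Lle_le_top B lo c) (Lle_refl B lo hlo c)
        have hs0 : s = none := Lle_le_none B lo (hs.2.2 none trivial trivial)
        subst hs0
        exact Lle_le_none B lo hzs
      | some a => cases b with
        | none =>
          have hsc : Lle B lo s c := hs.2.2 c trivial (Lle_refl B lo hlo c)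
          exact h2 z hza (Lle_trans B lo hlo z s c hzs hsc)
        | some b' => cases b' with
          | none => exact absurd (h1 _ (Lle_refl B lo hlo _) trivial) (Option.some_ne_none _)
          | some b => cases c with
            | none =>
              have hsb : Lle B lo s (some (some b)) := hs.2.2 _ (Lle_refl B lo hlo _) trivial
              exact h1 z hza (Lle_trans B lo hlo z s _ hzs hsb)
            | some c' => cases c' with
              | none => exact absurd (h2 _ (Lle_refl B lo hlo _) trivial) (Option.some_ne_none _)
              | some c =>
                have hab := disj_of_meet_none B lo hlo h1
                have hac := disj_of_meet_none B lo hlo h2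
                have hUne : skel B b.1 ∪ skel B c.1 ≠ ∅ := fun h' =>
                  b.2.1 (Set.subset_eq_empty Set.subset_union_left h')
                have hdisj : skel B a.1 ∩ (skel B b.1 ∪ skel B c.1) = ∅ := by
                  rw [Set.inter_union_distrib_left, hab, hac, Set.union_empty]
                have hUuniv : skel B b.1 ∪ skel B c.1 ≠ Set.univ := by
                  intro h'
                  apply a.2.1
                  calc skel B a.1 = skel B a.1 ∩ Set.univ := (Set.inter_univ _).symm
                    _ = skel B a.1 ∩ (skel B b.1 ∪ skel B c.1) := by rw [h']
                    _ = ∅ := hdisj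
                obtain ⟨w, hwI, hwmax⟩ := exists_lmax B lo hlo _ hUne hUuniv
                have hbu := hwmax b Set.subset_union_left
                have hcu := hwmax c Set.subset_union_right
                have hsu := hs.2.2 _ hbu hcu
                have hzu := Lle_trans B lo hlo z s _ hzs hsu
                cases z with
                | none => rfl
                | some z' => cases z' with
                  | none => exact absurd hza (Option.some_ne_none _)
                  | some zz =>
                    exfalso
                    apply zz.2.1
                    refine Set.subset_eq_empty ?_ hdisj
                    refine Set.subset_inter (skel_mono B lo hza) ?_
                    have := skel_mono B lo hzu
                    rwa [hwI] at this
  -- 1-distributivity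
  · intro a b c m hm h1 h2 z hza hzm
    cases a with
    | none =>
      obtain rfl : b = some none := h1 b trivial (Lle_refl B lo hlo b)
      obtain rfl : c = some none := h2 c trivial (Lle_refl B lo hlo c)
      have htm : Lle B lo (some none) m := hm.2.2 (some none) rfl rfl
      obtain rfl := Lle_top_le B lo htm
      exact Lle_top_le B lo hzm
    | some a' => cases a' with
      | none => exact Lle_top_le B lo hza
      | some a => cases b with
        | none => exact absurd (h1 _ (Lle_refl B lo hlo _) trivial) (by simp)
        | some b' => cases b' with
          | none =>
            have hcm : Lle B lo c m := hm.2.2 c (Lle_le_top B lo c) (Lle_refl B lo hlo c)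
            exact h2 z hza (Lle_trans B lo hlo c m z hcm hzm)
          | some b => cases c with
            | none => exact absurd (h2 _ (Lle_refl B lo hlo _) trivial) (by simp)
            | some c' => cases c' with
              | none =>
                have hbm : Lle B lo (some (some b)) m :=
                  hm.2.2 _ (Lle_refl B lo hlo _) (Lle_le_top B lo _)
                exact h1 z hza (Lle_trans B lo hlo _ m z hbm hzm)
              | some c =>
                have hab := union_univ_of_join_top B lo hlo h1
                have hac := union_univ_of_join_top B lo hlo h2
                have hcup : skel B a.1 ∪ (skel B b.1 ∩ skel B c.1) = Set.univ := by
                  rw [Set.union_inter_distrib_left, hab, hac, Set.univ_inter]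
                have hIne : skel B b.1 ∩ skel B c.1 ≠ ∅ := by
                  intro h'
                  apply a.2.2
                  calc skel B a.1 = skel B a.1 ∪ ∅ := (Set.union_empty _).symm
                    _ = skel B a.1 ∪ (skel B b.1 ∩ skel B c.1) := by rw [h']
                    _ = Set.univ := hcup
                have hIuniv : skel B b.1 ∩ skel B c.1 ≠ Set.univ := fun h' =>
                  b.2.2 (Set.eq_univ_of_univ_subset (le_of_eq_of_le h'.symm Set.inter_subset_left))
                obtain ⟨w, hwI, hwmin⟩ := exists_lmin B lo hlo _ hIne hIuniv
                have hwb := hwmin b Set.inter_subset_left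
                have hwc := hwmin c Set.inter_subset_right
                have hwm := hm.2.2 _ hwb hwc
                have hwz := Lle_trans B lo hlo _ m z hwm hzm
                cases z with
                | none => exact hza.elim
                | some z' => cases z' with
                  | none => rfl
                  | some zz =>
                    exfalso
                    apply zz.2.2
                    refine Set.eq_univ_of_univ_subset (le_of_eq_of_le hcup.symm ?_)
                    refine Set.union_subset (skel_mono B lo hza) ?_
                    have := skel_mono B lo hwz
                    rwa [hwI] at this
end

section
/- Let L be a finite lattice and let L' be the lattice obtained from L by replacing an element x₀ of L by a finite bounded chain C. If L is 0-distributive, then L' is 0-distributive; if L is 1-distributive, then L' is 1-distributive. -/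
/-!
The map `proj : L' → L` collapsing `C` to `x₀` has a left adjoint (sending `x₀` to `⊥ : C`) and a
right adjoint (sending `x₀` to `⊤ : C`). Hence `proj` sends the least element of `L'` to `⊥`, pairs
meeting in `0` to pairs meeting in `⊥`, and a join `b ∨ c` below `proj b ⊔ proj c`. So if
`z ≤ a` and `z ≤ b ∨ c` in `L'`, then `proj z ≤ proj a ⊓ (proj b ⊔ proj c) = ⊥`, and such a `z`
lies below `b` or below `c`, hence is `0`. The statement for `1` is the order dual.
-/

/-- The order on the poset `L'` obtained from a lattice `L` by replacing the
element `x₀` by the chain `C`: elements of `L \ {x₀}` compare as in `L`, elements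
of `C` compare as in `C`, and for `a ∈ L \ {x₀}` and `c ∈ C`, `a ≤ c` iff
`a ≤ x₀` in `L` and `c ≤ a` iff `x₀ ≤ a` in `L`. -/
def chainReplLe {L C : Type*} [Lattice L] [LinearOrder C] (x₀ : L) :
    ({a : L // a ≠ x₀} ⊕ C) → ({a : L // a ≠ x₀} ⊕ C) → Prop
  | Sum.inl a, Sum.inl b => a.1 ≤ b.1
  | Sum.inl a, Sum.inr _ => a.1 ≤ x₀
  | Sum.inr _, Sum.inl b => x₀ ≤ b.1
  | Sum.inr c, Sum.inr d => c ≤ d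

def ChainRepl {L : Type*} (x₀ : L) (C : Type*) : Type _ := {a : L // a ≠ x₀} ⊕ C

namespace ChainRepl

variable {L C : Type*} {x₀ : L}

def proj : ChainRepl x₀ C → L := Sum.elim Subtype.val fun _ => x₀

variable [LinearOrder C]

open scoped Classical in
noncomputable def lowerLift [OrderBot C] (l : L) : ChainRepl x₀ C :=
  if h : l = x₀ then Sum.inr ⊥ else Sum.inl ⟨l, h⟩

open scoped Classical in
noncomputable def upperLift [OrderTop C] (l : L) : ChainRepl x₀ C :=
  if h : l = x₀ then Sum.inr ⊤ else Sum.inl ⟨l, h⟩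

theorem lowerLift_self [OrderBot C] : (lowerLift x₀ : ChainRepl x₀ C) = Sum.inr ⊥ :=
  dif_pos rfl

theorem lowerLift_of_ne [OrderBot C] {l : L} (h : l ≠ x₀) :
    (lowerLift l : ChainRepl x₀ C) = Sum.inl ⟨l, h⟩ :=
  dif_neg h

theorem upperLift_self [OrderTop C] : (upperLift x₀ : ChainRepl x₀ C) = Sum.inr ⊤ :=
  dif_pos rfl

theorem upperLift_of_ne [OrderTop C] {l : L} (h : l ≠ x₀) :
    (upperLift l : ChainRepl x₀ C) = Sum.inl ⟨l, h⟩ :=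
  dif_neg h

theorem proj_lowerLift [OrderBot C] (l : L) : proj (lowerLift l : ChainRepl x₀ C) = l := by
  obtain rfl | h := eq_or_ne l x₀
  · rw [lowerLift_self]; rfl
  · rw [lowerLift_of_ne h]; rfl

variable [Lattice L]

instance : Preorder (ChainRepl x₀ C) where
  le := chainReplLe x₀
  le_refl x := by cases x <;> exact le_rfl
  le_trans x y z := by
    rcases x with a | a <;> rcases y with b | b <;> rcases z with c | c <;> intro h₁ h₂ <;>
      first
      | exact le_trans h₁ h₂
      | exact h₁
      | exact h₂
      | exact absurd (le_antisymm h₂ h₁) b.2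

theorem gc_lowerLift_proj [OrderBot C] :
    GaloisConnection (lowerLift : L → ChainRepl x₀ C) proj := by
  intro l y
  obtain rfl | h := eq_or_ne l x₀
  · rw [lowerLift_self]
    rcases y with b | d
    · exact Iff.rfl
    · exact iff_of_true bot_le le_rfl
  · rw [lowerLift_of_ne h]
    rcases y with b | d <;> exact Iff.rfl

theorem gc_proj_upperLift [OrderTop C] :
    GaloisConnection proj (upperLift : L → ChainRepl x₀ C) := by
  intro y l
  obtain rfl | h := eq_or_ne l x₀
  · rw [upperLift_self]
    rcases y with b | d
    · exact Iff.rfl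
    · exact iff_of_true le_rfl le_top
  · rw [upperLift_of_ne h]
    rcases y with b | d <;> exact Iff.rfl

theorem proj_le_proj_sup_proj [OrderTop C] {b c s : ChainRepl x₀ C}
    (hs : ∀ u, b ≤ u → c ≤ u → s ≤ u) : proj s ≤ proj b ⊔ proj c :=
  gc_proj_upperLift.l_le <| hs _ (gc_proj_upperLift.le_u le_sup_left)
    (gc_proj_upperLift.le_u le_sup_right)

section Bot

variable [OrderBot L] [OrderBot C] {b₀ : ChainRepl x₀ C} (hb₀ : ∀ x, b₀ ≤ x)
include hb₀

theorem proj_eq_bot_of_forall_le : proj b₀ = ⊥ :=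
  le_bot_iff.1 <| (gc_lowerLift_proj.monotone_u (hb₀ (lowerLift ⊥))).trans_eq (proj_lowerLift ⊥)

theorem inf_proj_eq_bot {u v : ChainRepl x₀ C} (h : ∀ z, z ≤ u → z ≤ v → z = b₀) :
    proj u ⊓ proj v = ⊥ := by
  have := h (lowerLift (proj u ⊓ proj v)) (gc_lowerLift_proj.l_le inf_le_left)
    (gc_lowerLift_proj.l_le inf_le_right)
  rw [← proj_eq_bot_of_forall_le hb₀, ← this, proj_lowerLift]

end Bot

/-- `proj z = ⊥` means that `z` is the bottom of `L`, or that `z ∈ C` and `x₀ = ⊥`; in the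
latter case `C` lies below all of `L \ {x₀}`. -/
theorem le_or_le_of_le_of_proj_eq_bot [OrderBot L] {z b c s : ChainRepl x₀ C} (hz : proj z = ⊥)
    (hs : ∀ u, b ≤ u → c ≤ u → s ≤ u) (hzs : z ≤ s) : z ≤ b ∨ z ≤ c := by
  rcases z with w | d
  · rcases b with b | b <;> exact Or.inl (hz.trans_le bot_le)
  rcases b with b | b
  · exact Or.inl (hz.trans_le bot_le)
  rcases c with c | c
  · exact Or.inr (hz.trans_le bot_le)
  exact le_max_iff.1 <| hzs.trans (hs (Sum.inr (max b c)) (le_max_left b c) (le_max_right b c))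

theorem zero_distrib [OrderBot L] [BoundedOrder C]
    (hL : ∀ a b c : L, a ⊓ b = ⊥ → a ⊓ c = ⊥ → a ⊓ (b ⊔ c) = ⊥)
    {b₀ a b c s : ChainRepl x₀ C} (hb₀ : ∀ x, b₀ ≤ x) (hs : ∀ u, b ≤ u → c ≤ u → s ≤ u)
    (hab : ∀ z, z ≤ a → z ≤ b → z = b₀) (hac : ∀ z, z ≤ a → z ≤ c → z = b₀) :
    ∀ z, z ≤ a → z ≤ s → z = b₀ := by
  intro z hza hzs
  have hz : proj z = ⊥ := le_bot_iff.1 <| calc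
    proj z ≤ proj a ⊓ (proj b ⊔ proj c) :=
      le_inf (gc_lowerLift_proj.monotone_u hza)
        ((gc_lowerLift_proj.monotone_u hzs).trans (proj_le_proj_sup_proj hs))
    _ = ⊥ := hL _ _ _ (inf_proj_eq_bot hb₀ hab) (inf_proj_eq_bot hb₀ hac)
  exact (le_or_le_of_le_of_proj_eq_bot hz hs hzs).elim (hab z hza) (hac z hza)

def dualEquiv : ChainRepl x₀ C ≃ ChainRepl (OrderDual.toDual x₀) Cᵒᵈ := Equiv.refl _

theorem dualEquiv_le_dualEquiv {x y : ChainRepl x₀ C} : dualEquiv x ≤ dualEquiv y ↔ y ≤ x := by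
  rcases x with a | a <;> rcases y with b | b <;> exact Iff.rfl

theorem one_distrib [OrderTop L] [BoundedOrder C]
    (hL : ∀ a b c : L, a ⊔ b = ⊤ → a ⊔ c = ⊤ → a ⊔ (b ⊓ c) = ⊤)
    {t₀ a b c m : ChainRepl x₀ C} (ht₀ : ∀ x, x ≤ t₀) (hm : ∀ u, u ≤ b → u ≤ c → u ≤ m)
    (hab : ∀ z, a ≤ z → b ≤ z → z = t₀) (hac : ∀ z, a ≤ z → c ≤ z → z = t₀) :
    ∀ z, a ≤ z → m ≤ z → z = t₀ := by
  intro z haz hmz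
  apply dualEquiv.injective
  refine zero_distrib (L := Lᵒᵈ) hL (b₀ := dualEquiv t₀) (a := dualEquiv a) (b := dualEquiv b)
    (c := dualEquiv c) (s := dualEquiv m) ?_ ?_ ?_ ?_ (dualEquiv z) ?_ ?_ <;>
  simpa only [← dualEquiv.forall_congr_right, dualEquiv_le_dualEquiv,
    dualEquiv.apply_eq_iff_eq]

end ChainRepl

/-- `L'` is described relationally: `b0` (resp. `t0`) is its least (resp. greatest) element,
`s` (resp. `m`) a least upper bound (resp. greatest lower bound) of `b` and `c`, and
"`u ∧ v = 0`" (resp. "`u ∨ v = 1`") says that `b0` (resp. `t0`) is the only common lower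
(resp. upper) bound of `u` and `v`. -/
theorem stmt5_general {L C : Type*} [Lattice L] [BoundedOrder L] [LinearOrder C]
    [BoundedOrder C] (x₀ : L) :
    -- 0-distributivity is preserved
    ((∀ a b c : L, a ⊓ b = ⊥ → a ⊓ c = ⊥ → a ⊓ (b ⊔ c) = ⊥) →
      ∀ b0 : {a : L // a ≠ x₀} ⊕ C, (∀ x, chainReplLe x₀ b0 x) →
      ∀ a b c s,
        (chainReplLe x₀ b s ∧ chainReplLe x₀ c s ∧
          ∀ u, chainReplLe x₀ b u → chainReplLe x₀ c u → chainReplLe x₀ s u) →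
        (∀ z, chainReplLe x₀ z a → chainReplLe x₀ z b → z = b0) →
        (∀ z, chainReplLe x₀ z a → chainReplLe x₀ z c → z = b0) →
        (∀ z, chainReplLe x₀ z a → chainReplLe x₀ z s → z = b0)) ∧
    -- 1-distributivity is preserved
    ((∀ a b c : L, a ⊔ b = ⊤ → a ⊔ c = ⊤ → a ⊔ (b ⊓ c) = ⊤) →
      ∀ t0 : {a : L // a ≠ x₀} ⊕ C, (∀ x, chainReplLe x₀ x t0) →
      ∀ a b c m,
        (chainReplLe x₀ m b ∧ chainReplLe x₀ m c ∧
          ∀ u, chainReplLe x₀ u b → chainReplLe x₀ u c → chainReplLe x₀ u m) →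
        (∀ z, chainReplLe x₀ a z → chainReplLe x₀ b z → z = t0) →
        (∀ z, chainReplLe x₀ a z → chainReplLe x₀ c z → z = t0) →
        (∀ z, chainReplLe x₀ a z → chainReplLe x₀ m z → z = t0)) := by
  exact ⟨fun hL _ hb₀ _ _ _ _ hs hab hac => ChainRepl.zero_distrib hL hb₀ hs.2.2 hab hac,
    fun hL _ ht₀ _ _ _ _ hm hab hac => ChainRepl.one_distrib hL ht₀ hm.2.2 hab hac⟩

/-- Let `L` be a finite bounded lattice and let `L'` be the lattice
obtained from `L` by replacing an element `x₀` by a finite bounded chain `C`.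
If `L` is 0-distributive then `L'` is 0-distributive, and if `L` is
1-distributive then `L'` is 1-distributive.  In `L'` this is stated relationally:
`b0` is the least (resp. `t0` the greatest) element of `L'`, `s` is a least upper
bound (resp. `m` a greatest lower bound) of `b` and `c`, and "`u ∧ v = 0`"
(resp. "`u ∨ v = 1`") means that the only common lower (resp. upper) bound of
`u, v` is `b0` (resp. `t0`). -/
theorem stmt5 {L C : Type*} [Fintype L] [Lattice L] [BoundedOrder L]
    [Fintype C] [LinearOrder C] [BoundedOrder C] (x₀ : L) :
    -- 0-distributivity is preserved
    ((∀ a b c : L, a ⊓ b = ⊥ → a ⊓ c = ⊥ → a ⊓ (b ⊔ c) = ⊥) →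
      ∀ b0 : {a : L // a ≠ x₀} ⊕ C, (∀ x, chainReplLe x₀ b0 x) →
      ∀ a b c s,
        (chainReplLe x₀ b s ∧ chainReplLe x₀ c s ∧
          ∀ u, chainReplLe x₀ b u → chainReplLe x₀ c u → chainReplLe x₀ s u) →
        (∀ z, chainReplLe x₀ z a → chainReplLe x₀ z b → z = b0) →
        (∀ z, chainReplLe x₀ z a → chainReplLe x₀ z c → z = b0) →
        (∀ z, chainReplLe x₀ z a → chainReplLe x₀ z s → z = b0)) ∧
    -- 1-distributivity is preserved
    ((∀ a b c : L, a ⊔ b = ⊤ → a ⊔ c = ⊤ → a ⊔ (b ⊓ c) = ⊤) →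
      ∀ t0 : {a : L // a ≠ x₀} ⊕ C, (∀ x, chainReplLe x₀ x t0) →
      ∀ a b c m,
        (chainReplLe x₀ m b ∧ chainReplLe x₀ m c ∧
          ∀ u, chainReplLe x₀ u b → chainReplLe x₀ u c → chainReplLe x₀ u m) →
        (∀ z, chainReplLe x₀ a z → chainReplLe x₀ b z → z = t0) →
        (∀ z, chainReplLe x₀ a z → chainReplLe x₀ c z → z = t0) →
        (∀ z, chainReplLe x₀ a z → chainReplLe x₀ m z → z = t0)) :=
  stmt5_general x₀
end

section
/- Let F be a finite field and V an n-dimensional vector space over F with basis B = {v_1, …, v_n}, and let 𝕃 be the lattice constructed from V (for any choice of the linear orders ≤_I). For x ∈ V_I and y ∈ V_J with ∅ ⊊ I, J ⊊ {1,…,n}, one has x ∧ y = 0 in 𝕃 if and only if I ∩ J = ∅, and x ∨ y = 1 in 𝕃 if and only if I ∪ J = {1,…,n}. -/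
lemma skel_sum {F V : Type*} [Field F] [AddCommGroup V] [Module F V] {n : ℕ}
    (B : Module.Basis (Fin n) F V) (s : Finset (Fin n)) :
    skel B (∑ i ∈ s, B i) = ↑s := by
  ext j
  simp [skel, Finsupp.single_apply, Finset.sum_ite_eq]

lemma skel_set {F V : Type*} [Field F] [AddCommGroup V] [Module F V] {n : ℕ}
    (B : Module.Basis (Fin n) F V) (s : Set (Fin n)) :
    skel B (∑ i ∈ s.toFinite.toFinset, B i) = s := by
  rw [skel_sum, Set.Finite.coe_toFinset]

lemma lo_congr {F V : Type*} [Field F] [AddCommGroup V] [Module F V] {n : ℕ}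
    (B : Module.Basis (Fin n) F V)
    (lo : ∀ I : Set (Fin n), {a : V // skel B a = I} → {a : V // skel B a = I} → Prop)
    {I J : Set (Fin n)} (h : I = J) (a b : {a : V // skel B a = I}) :
    lo I a b ↔ lo J ⟨a.1, a.2.trans h⟩ ⟨b.1, b.2.trans h⟩ := by
  subst h; rfl

/-- In the lattice 𝕃 constructed from `V` (for any choice of the
linear orders `≤_I`), for `x ∈ V_I` and `y ∈ V_J` with `∅ ⊊ I, J ⊊ {1,…,n}`:
`x ∧ y = 0` iff `I ∩ J = ∅` (the meet is `0` iff the only common lower bound is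
`0`), and `x ∨ y = 1` iff `I ∪ J = {1,…,n}` (the join is `1` iff the only common
upper bound is `1`). -/
theorem stmt6 {F V : Type*} [Field F] [Fintype F] [AddCommGroup V] [Module F V]
    {n : ℕ} (B : Module.Basis (Fin n) F V)
    (lo : ∀ I : Set (Fin n), {a : V // skel B a = I} → {a : V // skel B a = I} → Prop)
    (hlo : ∀ I : Set (Fin n), I ≠ ∅ → I ≠ Set.univ →
      IsLinearOrder {a : V // skel B a = I} (lo I))
    (x y : V) (hx : skel B x ≠ ∅ ∧ skel B x ≠ Set.univ)
    (hy : skel B y ≠ ∅ ∧ skel B y ≠ Set.univ) :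
    ((∀ z, Lle B lo z (some (some ⟨x, hx⟩)) → Lle B lo z (some (some ⟨y, hy⟩)) →
        z = none) ↔ skel B x ∩ skel B y = ∅) ∧
    ((∀ z, Lle B lo (some (some ⟨x, hx⟩)) z → Lle B lo (some (some ⟨y, hy⟩)) z →
        z = some none) ↔ skel B x ∪ skel B y = Set.univ) := by
  have rx : Lle B lo (some (some ⟨x, hx⟩)) (some (some ⟨x, hx⟩)) := by
    haveI := hlo (skel B x) hx.1 hx.2
    exact Or.inr ⟨rfl, refl_of (lo (skel B x)) _⟩
  have ry : Lle B lo (some (some ⟨y, hy⟩)) (some (some ⟨y, hy⟩)) := by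
    haveI := hlo (skel B y) hy.1 hy.2
    exact Or.inr ⟨rfl, refl_of (lo (skel B y)) _⟩
  constructor
  · constructor
    · -- meet: (∀ z lower bound → z = 0) → disjoint skeletons
      intro hall
      by_contra hne
      have key : ∀ w : Lmid B, Lle B lo (some (some w)) (some (some ⟨x, hx⟩)) →
          Lle B lo (some (some w)) (some (some ⟨y, hy⟩)) → False := by
        intro w h1 h2
        simpa using hall (some (some w)) h1 h2
      by_cases hxy : skel B x = skel B y
      · haveI := hlo (skel B x) hx.1 hx.2
        rcases total_of (lo (skel B x)) ⟨x, rfl⟩ ⟨y, hxy.symm⟩ with h | h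
        · exact key ⟨x, hx⟩ rx (Or.inr ⟨hxy, h⟩)
        · exact key ⟨y, hy⟩ (Or.inr ⟨hxy.symm, (lo_congr B lo hxy _ _).mp h⟩) ry
      · by_cases hs1 : skel B x ⊆ skel B y
        · exact key ⟨x, hx⟩ rx (Or.inl (HasSubset.Subset.ssubset_of_ne hs1 hxy))
        · by_cases hs2 : skel B y ⊆ skel B x
          · exact key ⟨y, hy⟩
              (Or.inl (HasSubset.Subset.ssubset_of_ne hs2 fun h => hxy h.symm)) ry
          · have hsk : skel B (∑ i ∈ (skel B x ∩ skel B y).toFinite.toFinset, B i)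
                = skel B x ∩ skel B y := skel_set B _
            refine key ⟨∑ i ∈ (skel B x ∩ skel B y).toFinite.toFinset, B i, ?_, ?_⟩
              (Or.inl ?_) (Or.inl ?_)
            · rw [hsk]; exact hne
            · rw [hsk]
              intro h
              exact hx.2 (Set.univ_subset_iff.mp (h ▸ Set.inter_subset_left))
            · rw [hsk]
              refine HasSubset.Subset.ssubset_of_ne Set.inter_subset_left fun h => hs1 ?_
              rw [← h]; exact Set.inter_subset_right
            · rw [hsk]
              refine HasSubset.Subset.ssubset_of_ne Set.inter_subset_right fun h => hs2 ?_
              rw [← h]; exact Set.inter_subset_left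
    · -- disjoint skeletons → only lower bound is 0
      intro hdisj z h1 h2
      rcases z with _ | (_ | w)
      · rfl
      · exact absurd (show (some (⟨x, hx⟩ : Lmid B)) = none from h1) (Option.some_ne_none _)
      · exfalso
        have hw1 : skel B w.1 ⊆ skel B x := by
          rcases h1 with h | ⟨h, -⟩
          · exact h.subset
          · exact h.subset
        have hw2 : skel B w.1 ⊆ skel B y := by
          rcases h2 with h | ⟨h, -⟩
          · exact h.subset
          · exact h.subset
        apply w.2.1
        rw [← Set.subset_empty_iff]
        exact subset_trans (Set.subset_inter hw1 hw2) hdisj.subset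
  · constructor
    · -- join: (∀ z upper bound → z = 1) → skeletons cover
      intro hall
      by_contra hne
      have key : ∀ w : Lmid B, Lle B lo (some (some ⟨x, hx⟩)) (some (some w)) →
          Lle B lo (some (some ⟨y, hy⟩)) (some (some w)) → False := by
        intro w h1 h2
        simpa using hall (some (some w)) h1 h2
      by_cases hxy : skel B x = skel B y
      · haveI := hlo (skel B x) hx.1 hx.2
        rcases total_of (lo (skel B x)) ⟨x, rfl⟩ ⟨y, hxy.symm⟩ with h | h
        · exact key ⟨y, hy⟩ (Or.inr ⟨hxy, h⟩) ry
        · exact key ⟨x, hx⟩ rx (Or.inr ⟨hxy.symm, (lo_congr B lo hxy _ _).mp h⟩)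
      · by_cases hs1 : skel B x ⊆ skel B y
        · exact key ⟨y, hy⟩ (Or.inl (HasSubset.Subset.ssubset_of_ne hs1 hxy)) ry
        · by_cases hs2 : skel B y ⊆ skel B x
          · exact key ⟨x, hx⟩ rx
              (Or.inl (HasSubset.Subset.ssubset_of_ne hs2 fun h => hxy h.symm))
          · have hsk : skel B (∑ i ∈ (skel B x ∪ skel B y).toFinite.toFinset, B i)
                = skel B x ∪ skel B y := skel_set B _
            refine key ⟨∑ i ∈ (skel B x ∪ skel B y).toFinite.toFinset, B i, ?_, ?_⟩
              (Or.inl ?_) (Or.inl ?_)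
            · rw [hsk]
              intro h
              exact hx.1 (Set.union_empty_iff.mp h).1
            · rw [hsk]; exact hne
            · rw [hsk]
              refine HasSubset.Subset.ssubset_of_ne Set.subset_union_left fun h => hs2 ?_
              rw [h]; exact Set.subset_union_right
            · rw [hsk]
              refine HasSubset.Subset.ssubset_of_ne Set.subset_union_right fun h => hs1 ?_
              rw [h]; exact Set.subset_union_left
    · -- skeletons cover → only upper bound is 1
      intro huniv z h1 h2
      rcases z with _ | (_ | w)
      · exact h1.elim
      · rfl
      · exfalso
        have hw1 : skel B x ⊆ skel B w.1 := by
          rcases h1 with h | ⟨h, -⟩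
          · exact h.subset
          · exact h.subset
        have hw2 : skel B y ⊆ skel B w.1 := by
          rcases h2 with h | ⟨h, -⟩
          · exact h.subset
          · exact h.subset
        apply w.2.2
        exact Set.univ_subset_iff.mp
          (subset_trans huniv.symm.subset (Set.union_subset hw1 hw2))
end

section
/- Let V be a finite dimensional vector space over a finite field F with basis B. The nonzero component graph IG(V) is chordal if and only if dim(V) ≤ 3. -/
/-- The nonzero component union graph UG(V) with respect to a basis: vertices are
the nonzero vectors, and distinct `a, b` are adjacent iff the union of their
skeletons is the whole basis. -/
def compUnionGraph {F V : Type*} [Field F] [AddCommGroup V] [Module F V] {n : ℕ}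
    (B : Module.Basis (Fin n) F V) : SimpleGraph {a : V // a ≠ 0} where
  Adj a b := a ≠ b ∧ skel B a.1 ∪ skel B b.1 = Set.univ
  symm := ⟨by
    rintro a b ⟨hne, h⟩
    exact ⟨hne.symm, by rwa [Set.union_comm]⟩⟩
  loopless := ⟨fun a h => h.1 rfl⟩

/-- A graph is chordal if it contains no induced cycle of length at least 4
(graph embeddings are precisely induced subgraph inclusions). -/
def IsChordal {α : Type*} (G : SimpleGraph α) : Prop :=
  ∀ m : ℕ, 4 ≤ m → IsEmpty (SimpleGraph.cycleGraph m ↪g G)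

/-! ### Auxiliary lemmas -/

lemma myFinSubVal {m : ℕ} (a b : Fin m) :
    (a - b).val = if b.val ≤ a.val then a.val - b.val else m + a.val - b.val := by
  have ha := a.isLt; have hb := b.isLt
  rw [Fin.sub_def]
  show (m - b.val + a.val) % m = _
  rcases le_or_gt b.val a.val with h | h
  · rw [if_pos h, show m - b.val + a.val = m + (a.val - b.val) by omega,
      Nat.add_mod_left, Nat.mod_eq_of_lt (by omega)]
  · rw [if_neg (not_le.mpr h), Nat.mod_eq_of_lt (by omega)]
    omega

lemma myCycleAdjIff {m : ℕ} (p q : ℕ) (hp : p < m) (hq : q < m) :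
    (SimpleGraph.cycleGraph m).Adj ⟨p, hp⟩ ⟨q, hq⟩ ↔
      ((if q ≤ p then p - q else m + p - q) = 1 ∨
       (if p ≤ q then q - p else m + q - p) = 1) := by
  rw [SimpleGraph.cycleGraph_adj', myFinSubVal, myFinSubVal]

lemma mySkelPair {F V : Type*} [Field F] [AddCommGroup V] [Module F V] {n : ℕ}
    (B : Module.Basis (Fin n) F V) {i j : Fin n} (hij : i ≠ j) :
    skel B (B i + B j) = {i, j} := by
  ext k
  simp only [skel, Set.mem_setOf_eq, map_add, Module.Basis.repr_self, Finsupp.add_apply,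
    Finsupp.single_apply, Set.mem_insert_iff, Set.mem_singleton_iff]
  by_cases h1 : k = i <;> by_cases h2 : k = j <;> simp_all [eq_comm]

lemma mySkelNonempty {F V : Type*} [Field F] [AddCommGroup V] [Module F V] {n : ℕ}
    (B : Module.Basis (Fin n) F V) {a : V} (h : a ≠ 0) : (skel B a).Nonempty := by
  rw [Set.nonempty_def]
  by_contra hc
  push_neg at hc
  apply h
  have : B.repr a = 0 := Finsupp.ext fun i => by simpa [skel] using hc i
  simpa using congrArg B.repr.symm this

lemma myPairNeZero {F V : Type*} [Field F] [AddCommGroup V] [Module F V] {n : ℕ}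
    (B : Module.Basis (Fin n) F V) {i j : Fin n} (hij : i ≠ j) : B i + B j ≠ 0 := by
  intro h
  have := congrArg (fun v => B.repr v i) h
  simp [Module.Basis.repr_self, Finsupp.single_apply, hij.symm] at this

lemma myCompGraphAdj {F V : Type*} [Field F] [AddCommGroup V] [Module F V] {n : ℕ}
    (B : Module.Basis (Fin n) F V) (a b : {a : V // a ≠ 0}) :
    (compGraph B).Adj a b ↔ a ≠ b ∧ (skel B a.1 ∩ skel B b.1).Nonempty := Iff.rfl

lemma myPairInter {α : Type*} {i j k l : α} :
    (({i, j} : Set α) ∩ {k, l}).Nonempty ↔ (i = k ∨ i = l) ∨ (j = k ∨ j = l) := by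
  constructor
  · rintro ⟨x, hx1, hx2⟩
    simp only [Set.mem_insert_iff, Set.mem_singleton_iff] at hx1 hx2
    rcases hx1 with rfl | rfl <;> tauto
  · rintro ((rfl | rfl) | (rfl | rfl))
    exacts [⟨i, by simp⟩, ⟨i, by simp⟩, ⟨j, by simp⟩, ⟨j, by simp⟩]

set_option maxHeartbeats 1000000 in
/-- For a finite dimensional vector space `V` over a finite field `F`
with basis `B`, the nonzero component graph `IG(V)` is chordal iff `dim V ≤ 3`. -/
theorem stmt8 {F V : Type*} [Field F] [Fintype F] [AddCommGroup V] [Module F V]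
    {n : ℕ} (hn : 1 ≤ n) (B : Module.Basis (Fin n) F V) :
    IsChordal (compGraph B) ↔ n ≤ 3 := by
  constructor
  · -- chordal → n ≤ 3
    intro h
    by_contra hn3
    push_neg at hn3
    have hn4 : 4 ≤ n := hn3
    set i0 : Fin n := ⟨0, by omega⟩ with hi0
    set i1 : Fin n := ⟨1, by omega⟩ with hi1
    set i2 : Fin n := ⟨2, by omega⟩ with hi2
    set i3 : Fin n := ⟨3, by omega⟩ with hi3
    have d01 : i0 ≠ i1 := by rw [hi0, hi1]; simp [Fin.ext_iff]
    have d02 : i0 ≠ i2 := by rw [hi0, hi2]; simp [Fin.ext_iff]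
    have d03 : i0 ≠ i3 := by rw [hi0, hi3]; simp [Fin.ext_iff]
    have d12 : i1 ≠ i2 := by rw [hi1, hi2]; simp [Fin.ext_iff]
    have d13 : i1 ≠ i3 := by rw [hi1, hi3]; simp [Fin.ext_iff]
    have d23 : i2 ≠ i3 := by rw [hi2, hi3]; simp [Fin.ext_iff]
    have s0 : skel B (B i0 + B i1) = {i0, i1} := mySkelPair B d01
    have s1 : skel B (B i1 + B i2) = {i1, i2} := mySkelPair B d12
    have s2 : skel B (B i2 + B i3) = {i2, i3} := mySkelPair B d23
    have s3 : skel B (B i3 + B i0) = {i3, i0} := mySkelPair B d03.symm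
    have nz0 : B i0 + B i1 ≠ 0 := myPairNeZero B d01
    have nz1 : B i1 + B i2 ≠ 0 := myPairNeZero B d12
    have nz2 : B i2 + B i3 ≠ 0 := myPairNeZero B d23
    have nz3 : B i3 + B i0 ≠ 0 := myPairNeZero B d03.symm
    have hne : ∀ (x y : V), skel B x ≠ skel B y → x ≠ y :=
      fun x y hxy h => hxy (by rw [h])
    have hw01 : B i0 + B i1 ≠ B i1 + B i2 := by
      refine hne _ _ ?_
      rw [s0, s1]
      intro hset
      have : i0 ∈ ({i1, i2} : Set (Fin n)) := hset ▸ (by simp : i0 ∈ ({i0, i1} : Set (Fin n)))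
      simp [d01, d02] at this
    have hw02 : B i0 + B i1 ≠ B i2 + B i3 := by
      refine hne _ _ ?_
      rw [s0, s2]
      intro hset
      have : i0 ∈ ({i2, i3} : Set (Fin n)) := hset ▸ (by simp : i0 ∈ ({i0, i1} : Set (Fin n)))
      simp [d02, d03] at this
    have hw03 : B i0 + B i1 ≠ B i3 + B i0 := by
      refine hne _ _ ?_
      rw [s0, s3]
      intro hset
      have : i1 ∈ ({i3, i0} : Set (Fin n)) := hset ▸ (by simp : i1 ∈ ({i0, i1} : Set (Fin n)))
      simp [d13, d01.symm] at this
    have hw12 : B i1 + B i2 ≠ B i2 + B i3 := by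
      refine hne _ _ ?_
      rw [s1, s2]
      intro hset
      have : i1 ∈ ({i2, i3} : Set (Fin n)) := hset ▸ (by simp : i1 ∈ ({i1, i2} : Set (Fin n)))
      simp [d12, d13] at this
    have hw13 : B i1 + B i2 ≠ B i3 + B i0 := by
      refine hne _ _ ?_
      rw [s1, s3]
      intro hset
      have : i1 ∈ ({i3, i0} : Set (Fin n)) := hset ▸ (by simp : i1 ∈ ({i1, i2} : Set (Fin n)))
      simp [d13, d01.symm] at this
    have hw23 : B i2 + B i3 ≠ B i3 + B i0 := by
      refine hne _ _ ?_
      rw [s2, s3]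
      intro hset
      have : i2 ∈ ({i3, i0} : Set (Fin n)) := hset ▸ (by simp : i2 ∈ ({i2, i3} : Set (Fin n)))
      simp [d23, d02.symm] at this
    have hw10 := hw01.symm; have hw20 := hw02.symm; have hw30 := hw03.symm
    have hw21 := hw12.symm; have hw31 := hw13.symm; have hw32 := hw23.symm
    refine (h 4 le_rfl).false ⟨⟨![⟨_, nz0⟩, ⟨_, nz1⟩, ⟨_, nz2⟩, ⟨_, nz3⟩], ?_⟩, ?_⟩
    · intro a b hab
      fin_cases a <;> fin_cases b <;> simp_all [Subtype.mk.injEq]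
    · intro a b
      erw [Function.Embedding.coeFn_mk]
      fin_cases a <;> fin_cases b <;>
        simp (config := { decide := true }) [myCompGraphAdj, Subtype.mk.injEq,
          s0, s1, s2, s3, myPairInter, d01, d02, d03, d12, d13, d23,
          d01.symm, d02.symm, d03.symm, d12.symm, d13.symm, d23.symm,
          hw01, hw02, hw03, hw12, hw13, hw23, hw10, hw20, hw30, hw21, hw31, hw32]
  · -- n ≤ 3 → chordal
    intro hn3 m hm
    constructor
    intro f
    have hm0 : 0 < m := by omega
    obtain ⟨v4, hv4lt, hv4spec⟩ :
        ∃ v, v < m ∧ (v = 0 ∧ m = 4 ∨ v = 4 ∧ 5 ≤ m) := by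
      refine ⟨4 % m, Nat.mod_lt _ hm0, ?_⟩
      rcases eq_or_lt_of_le hm with h | h
      · left
        exact ⟨by rw [← h], h.symm⟩
      · right; exact ⟨Nat.mod_eq_of_lt h, h⟩
    set S : Fin m → Set (Fin n) := fun i => skel B ((f i).1) with hS
    have adj_of : ∀ {i j : Fin m}, (SimpleGraph.cycleGraph m).Adj i j →
        (S i ∩ S j).Nonempty := fun h => ((myCompGraphAdj B _ _).mp (f.map_rel_iff.mpr h)).2
    have disj : ∀ (i j : Fin m), i ≠ j → ¬(SimpleGraph.cycleGraph m).Adj i j →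
        ∀ x, x ∈ S i → x ∈ S j → False := by
      intro i j hij hnadj x hxi hxj
      exact hnadj (f.map_rel_iff.mp
        ((myCompGraphAdj B _ _).mpr ⟨fun hh => hij (f.injective hh), ⟨x, hxi, hxj⟩⟩))
    have adj01 : (SimpleGraph.cycleGraph m).Adj ⟨0, by omega⟩ ⟨1, by omega⟩ :=
      (myCycleAdjIff 0 1 (by omega) (by omega)).mpr (by split_ifs <;> omega)
    have adj12 : (SimpleGraph.cycleGraph m).Adj ⟨1, by omega⟩ ⟨2, by omega⟩ :=
      (myCycleAdjIff 1 2 (by omega) (by omega)).mpr (by split_ifs <;> omega)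
    have adj23 : (SimpleGraph.cycleGraph m).Adj ⟨2, by omega⟩ ⟨3, by omega⟩ :=
      (myCycleAdjIff 2 3 (by omega) (by omega)).mpr (by split_ifs <;> omega)
    have adj34 : (SimpleGraph.cycleGraph m).Adj ⟨3, by omega⟩ ⟨v4, hv4lt⟩ :=
      (myCycleAdjIff 3 v4 (by omega) hv4lt).mpr (by split_ifs <;> omega)
    have nadj02 : ¬(SimpleGraph.cycleGraph m).Adj ⟨0, by omega⟩ ⟨2, by omega⟩ := by
      rw [myCycleAdjIff]; split_ifs <;> omega
    have nadj13 : ¬(SimpleGraph.cycleGraph m).Adj ⟨1, by omega⟩ ⟨3, by omega⟩ := by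
      rw [myCycleAdjIff]; split_ifs <;> omega
    have nadj24 : ¬(SimpleGraph.cycleGraph m).Adj ⟨2, by omega⟩ ⟨v4, hv4lt⟩ := by
      rw [myCycleAdjIff]; split_ifs <;> omega
    have ne02 : (⟨0, by omega⟩ : Fin m) ≠ ⟨2, by omega⟩ := by simp [Fin.ext_iff]
    have ne13 : (⟨1, by omega⟩ : Fin m) ≠ ⟨3, by omega⟩ := by simp [Fin.ext_iff]
    have ne24 : (⟨2, by omega⟩ : Fin m) ≠ ⟨v4, hv4lt⟩ := by simp [Fin.ext_iff]; omega
    obtain ⟨x, hx0, hx1⟩ := adj_of adj01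
    obtain ⟨y, hy1, hy2⟩ := adj_of adj12
    obtain ⟨z, hz2, hz3⟩ := adj_of adj23
    obtain ⟨w, hw3, hw4⟩ := adj_of adj34
    have hxy : x ≠ y := fun hh => disj _ _ ne02 nadj02 x hx0 (hh ▸ hy2)
    have hxz : x ≠ z := fun hh => disj _ _ ne13 nadj13 x hx1 (hh ▸ hz3)
    have hyz : y ≠ z := fun hh => disj _ _ ne13 nadj13 y hy1 (hh ▸ hz3)
    have hxw : x ≠ w := fun hh => disj _ _ ne13 nadj13 x hx1 (hh ▸ hw3)
    have hyw : y ≠ w := fun hh => disj _ _ ne13 nadj13 y hy1 (hh ▸ hw3)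
    have hzw : z ≠ w := fun hh => disj _ _ ne24 nadj24 z hz2 (hh ▸ hw4)
    have hcard : ({x, y, z, w} : Finset (Fin n)).card = 4 := by
      rw [Finset.card_insert_of_notMem (by simp [hxy, hxz, hxw]),
        Finset.card_insert_of_notMem (by simp [hyz, hyw]),
        Finset.card_insert_of_notMem (by simp [hzw]), Finset.card_singleton]
    have hle := Finset.card_le_univ ({x, y, z, w} : Finset (Fin n))
    rw [hcard] at hle
    simp only [Finset.card_univ, Fintype.card_fin] at hle
    omega
end

section
/- Let V be a finite dimensional vector space over a finite field F with basis B. The nonzero component graph IG(V) is perfect if and only if dim(V) ≤ 4. -/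
/-- A graph is perfect if for every induced subgraph the chromatic number equals
the clique number. -/
def IsPerfect {α : Type*} (G : SimpleGraph α) : Prop :=
  ∀ s : Set α, (G.induce s).chromaticNumber = ((G.induce s).cliqueNum : ℕ∞)

set_option maxHeartbeats 1000000
universe u
namespace NZCG
open Finset
set_option linter.unusedSectionVars false


def famS (x : Fin 4) : Finset (Finset (Fin 4)) := univ.filter (fun A => x ∈ A)
def famF (T : Finset (Fin 4)) : Finset (Finset (Fin 4)) := univ.filter (fun A => 2 ≤ (A ∩ T).card)
def famN (x : Fin 4) : Finset (Finset (Fin 4)) := univ.filter (fun A => (x ∈ A ∧ 2 ≤ A.card) ∨ A = univ.erase x)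
def Intersecting (M : Finset (Finset (Fin 4))) : Prop := ∀ A ∈ M, ∀ B ∈ M, (A ∩ B).Nonempty
instance : DecidablePred Intersecting := fun M =>
  decidable_of_iff (∀ A ∈ M, ∀ B ∈ M, (A ∩ B).Nonempty) Iff.rfl

lemma inter_famS : ∀ x, Intersecting (famS x) := by decide
lemma inter_famN : ∀ x, Intersecting (famN x) := by decide
lemma inter_famF : ∀ T : Finset (Fin 4), T.card = 3 → Intersecting (famF T) := by decide

lemma mem_famS {A : Finset (Fin 4)} {x : Fin 4} : A ∈ famS x ↔ x ∈ A := by simp [famS]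

lemma mem_famF {A T : Finset (Fin 4)} : A ∈ famF T ↔ 2 ≤ (A ∩ T).card := by simp [famF]
lemma mem_famN {A : Finset (Fin 4)} {x : Fin 4} :
    A ∈ famN x ↔ ((x ∈ A ∧ 2 ≤ A.card) ∨ A = univ.erase x) := by simp [famN]

lemma L1 : ∀ A : Finset (Fin 4), 3 ≤ A.card → 2 ≤ (A ∩ ({0,1,2} : Finset (Fin 4))).card := by decide
lemma L2 : ∀ (B : Finset (Fin 4)) (y : Fin 4), y ∈ B → B.card = 2 → ∃ z, z ≠ y ∧ B = {y, z} := by decide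
lemma L3 : ∀ (A : Finset (Fin 4)) (x y z : Fin 4), x ≠ y → y ≠ z → x ≠ z →
    (A ∩ {x, y}).Nonempty → (A ∩ {y, z}).Nonempty → (A ∩ {x, z}).Nonempty →
    2 ≤ (A ∩ {x, y, z}).card := by decide
lemma L3' : ∀ (x y z : Fin 4), x ≠ y → y ≠ z → x ≠ z → ({x,y,z} : Finset (Fin 4)).card = 3 := by decide
lemma L4 : ∀ (A : Finset (Fin 4)) (y : Fin 4), y ∈ A → A ≠ {y} → 2 ≤ A.card := by decide
lemma L5 : ∀ (A : Finset (Fin 4)) (y : Fin 4), 3 ≤ A.card → y ∉ A → A = univ.erase y := by decide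

lemma mem_of_inter_pair {A : Finset (Fin 4)} {x y : Fin 4}
    (h : (A ∩ ({x, y} : Finset (Fin 4))).Nonempty) (hx : x ∉ A) : y ∈ A := by
  obtain ⟨z, hz⟩ := h
  rw [Finset.mem_inter, Finset.mem_insert, Finset.mem_singleton] at hz
  rcases hz.2 with rfl | rfl
  · exact absurd hz.1 hx
  · exact hz.1

lemma classify (S : Finset (Finset (Fin 4))) (h0 : ∀ A ∈ S, A ≠ ∅)
    (h1 : ∀ A ∈ S, ∀ B ∈ S, (A ∩ B).Nonempty) :
    (∃ x, S ⊆ famS x) ∨ (∃ T, T.card = 3 ∧ S ⊆ famF T) ∨ (∃ x, S ⊆ famN x) := by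
  by_cases hx : ∃ x, ∀ A ∈ S, x ∈ A
  · obtain ⟨x, hx⟩ := hx
    exact Or.inl ⟨x, fun A hA => mem_famS.mpr (hx A hA)⟩
  push_neg at hx
  by_cases hp : ∃ e ∈ S, e.card ≤ 2
  · obtain ⟨e, he, hec⟩ := hp
    have hec1 : 1 ≤ e.card := Finset.card_pos.mpr (Finset.nonempty_iff_ne_empty.mpr (h0 e he))
    interval_cases h : e.card
    · -- card 1
      obtain ⟨x, rfl⟩ := Finset.card_eq_one.mp h
      refine Or.inl ⟨x, fun A hA => mem_famS.mpr ?_⟩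
      obtain ⟨z, hz⟩ := h1 A hA _ he
      rw [Finset.mem_inter, Finset.mem_singleton] at hz
      exact hz.2 ▸ hz.1
    · -- card 2
      obtain ⟨x, y, hxy, rfl⟩ := Finset.card_eq_two.mp h
      obtain ⟨B, hB, hxB⟩ := hx x
      have hyB : y ∈ B := mem_of_inter_pair (h1 B hB _ he) hxB
      by_cases hB2 : ∃ B' ∈ S, x ∉ B' ∧ B'.card ≤ 2
      · obtain ⟨B', hB', hxB', hB'c⟩ := hB2
        have hyB' : y ∈ B' := mem_of_inter_pair (h1 B' hB' _ he) hxB'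
        have hB'c1 : 1 ≤ B'.card := Finset.card_pos.mpr ⟨y, hyB'⟩
        interval_cases h' : B'.card
        · obtain ⟨w, rfl⟩ := Finset.card_eq_one.mp h'
          rw [Finset.mem_singleton] at hyB'
          subst hyB'
          refine Or.inl ⟨y, fun A hA => mem_famS.mpr ?_⟩
          obtain ⟨z, hz⟩ := h1 A hA _ hB'
          rw [Finset.mem_inter, Finset.mem_singleton] at hz
          exact hz.2 ▸ hz.1
        · obtain ⟨z, hzy, rfl⟩ := L2 B' y hyB' h'
          have hzx : z ≠ x := fun hzxeq => hxB' (by simp [hzxeq])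
          by_cases hC : ∃ C ∈ S, y ∉ C ∧ C.card ≤ 2
          · obtain ⟨C, hCS, hyC, hCc⟩ := hC
            have hxC : x ∈ C := by
              have h' := h1 C hCS _ he
              obtain ⟨u, hu⟩ := h'
              rw [Finset.mem_inter, Finset.mem_insert, Finset.mem_singleton] at hu
              rcases hu.2 with rfl | rfl
              · exact hu.1
              · exact absurd hu.1 hyC
            have hzC : z ∈ C := by
              obtain ⟨u, hu⟩ := h1 C hCS _ hB'
              rw [Finset.mem_inter, Finset.mem_insert, Finset.mem_singleton] at hu
              rcases hu.2 with rfl | rfl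
              · exact absurd hu.1 hyC
              · exact hu.1
            have hCeq : ({x, z} : Finset (Fin 4)) = C := by
              apply Finset.eq_of_subset_of_card_le
              · intro u hu
                rw [Finset.mem_insert, Finset.mem_singleton] at hu
                rcases hu with rfl | rfl
                · exact hxC
                · exact hzC
              · have : ({x, z} : Finset (Fin 4)).card = 2 := Finset.card_pair (Ne.symm hzx)
                omega
            refine Or.inr (Or.inl ⟨{x, y, z}, L3' x y z hxy hzy.symm hzx.symm, fun A hA => mem_famF.mpr ?_⟩)
            exact L3 A x y z hxy hzy.symm hzx.symm (h1 A hA _ he) (h1 A hA _ hB')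
              (by rw [hCeq]; exact h1 A hA _ hCS)
          · push_neg at hC
            refine Or.inr (Or.inr ⟨y, fun A hA => mem_famN.mpr ?_⟩)
            by_cases hyA : y ∈ A
            · left
              refine ⟨hyA, L4 A y hyA ?_⟩
              rintro rfl
              obtain ⟨D, hD, hyD⟩ := hx y
              obtain ⟨u, hu⟩ := h1 D hD _ hA
              rw [Finset.mem_inter, Finset.mem_singleton] at hu
              exact hyD (hu.2 ▸ hu.1)
            · right
              exact L5 A y (hC A hA hyA) hyA
      · push_neg at hB2
        refine Or.inr (Or.inr ⟨x, fun A hA => mem_famN.mpr ?_⟩)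
        by_cases hxA : x ∈ A
        · left
          refine ⟨hxA, L4 A x hxA ?_⟩
          rintro rfl
          obtain ⟨D, hD, hxD⟩ := hx x
          obtain ⟨u, hu⟩ := h1 D hD _ hA
          rw [Finset.mem_inter, Finset.mem_singleton] at hu
          exact hxD (hu.2 ▸ hu.1)
        · right
          exact L5 A x (hB2 A hA hxA) hxA
  · push_neg at hp
    refine Or.inr (Or.inl ⟨{0,1,2}, by decide, fun A hA => mem_famF.mpr (L1 A (hp A hA))⟩)



-- decide facts for the hitting-set construction
lemma univ_famS : ∀ x, (univ : Finset (Fin 4)) ∈ famS x := by decide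
lemma univ_famF : ∀ T : Finset (Fin 4), T.card = 3 → (univ : Finset (Fin 4)) ∈ famF T := by decide
lemma univ_famN : ∀ x, (univ : Finset (Fin 4)) ∈ famN x := by decide
lemma erase_ne_single : ∀ x : Fin 4, Finset.univ.erase x ≠ ({x} : Finset (Fin 4)) := by decide
lemma erase_inter_single : ∀ x : Fin 4, (Finset.univ.erase x) ∩ ({x} : Finset (Fin 4)) = ∅ := by decide
lemma D2S : ∀ x p : Fin 4, (univ.erase x ∈ famS p) ∨ (({x} : Finset (Fin 4)) ∈ famS p) := by decide
lemma erase_famF : ∀ (x : Fin 4) (T : Finset (Fin 4)), T.card = 3 → univ.erase x ∈ famF T := by decide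
lemma erase_famN : ∀ x p : Fin 4, univ.erase x ∈ famN p := by decide
lemma erase_famS : ∀ x p : Fin 4, x ≠ p → univ.erase x ∈ famS p := by decide
lemma single_famS : ∀ x, ({x} : Finset (Fin 4)) ∈ famS x := by decide
lemma memN_of : ∀ (A : Finset (Fin 4)) (x : Fin 4), x ∈ A → A ≠ {x} → A ∈ famN x := by decide
lemma Lsmall : ∀ A : Finset (Fin 4), A ≠ ∅ → A ≠ univ → (∀ x, A ≠ univ.erase x) → A.card ≤ 2 := by decide
lemma Ldisj : ∀ e e' : Finset (Fin 4), e.card = 2 → e'.card = 2 → e ∩ e' = ∅ → e ≠ e' := by decide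
lemma D4S : ∀ (e e' : Finset (Fin 4)) (p : Fin 4), e.card = 2 → e'.card = 2 → e ∩ e' = ∅ →
    e ∈ famS p ∨ e' ∈ famS p := by decide
lemma D4F : ∀ (e e' T : Finset (Fin 4)), e.card = 2 → e'.card = 2 → e ∩ e' = ∅ → T.card = 3 →
    e ∈ famF T ∨ e' ∈ famF T := by decide
lemma D4N : ∀ (e e' : Finset (Fin 4)) (p : Fin 4), e.card = 2 → e'.card = 2 → e ∩ e' = ∅ →
    e ∈ famN p ∨ e' ∈ famN p := by decide
lemma D4b1 : ∀ (A e : Finset (Fin 4)) (p : Fin 4), p ∉ e → e.card = 2 → p ∈ A → A.card ≤ 2 →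
    A ≠ {p} → (A ∩ e).Nonempty → A ∈ famF (insert p e) := by decide
lemma D4b2 : ∀ (e : Finset (Fin 4)) (p : Fin 4), e.card = 2 → p ∉ e →
    e ∈ famF (insert p e) ∧ (insert p e).card = 3 := by decide
lemma D4b3 : ∀ (e T : Finset (Fin 4)), e.card = 2 → T.card = 3 → e ∉ famF T →
    ∃ x, x ∈ e ∧ e ∩ T = {x} := by decide
lemma Dsub : ∀ A T : Finset (Fin 4), A.card ≤ 2 → A ∈ famF T → A ⊆ T ∧ A.card = 2 := by decide
lemma pair_famN : ∀ (e : Finset (Fin 4)) (p : Fin 4), p ∈ e → e.card = 2 → e ∈ famN p := by decide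
lemma mem_famN_small : ∀ (A : Finset (Fin 4)) (p : Fin 4), A.card ≤ 2 → A ∈ famN p → p ∈ A := by decide
lemma singleton_eq : ∀ (A : Finset (Fin 4)) (p : Fin 4), A.card = 1 → p ∈ A → A = {p} := by decide
lemma card1_famF : ∀ (A T : Finset (Fin 4)), A.card ≤ 1 → A ∉ famF T := by decide
lemma card1_famN : ∀ (A : Finset (Fin 4)) (p : Fin 4), A.card ≤ 1 → A ∉ famN p := by decide


section Tools
variable {α : Type u} [Fintype α] {G : SimpleGraph α} {f : α → Finset (Fin 4)}

lemma clique_of_mem (hadj : ∀ u v, G.Adj u v ↔ u ≠ v ∧ (f u ∩ f v).Nonempty)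
    {M : Finset (Finset (Fin 4))} (hM : Intersecting M) {s : Finset α}
    (h : ∀ v ∈ s, f v ∈ M) : G.IsClique ↑s := by
  intro u hu v hv hne
  exact (hadj u v).mpr ⟨hne, hM _ (h u (Finset.mem_coe.mp hu)) _ (h v (Finset.mem_coe.mp hv))⟩

lemma card_lt_of_hit (hadj : ∀ u v, G.Adj u v ↔ u ≠ v ∧ (f u ∩ f v).Nonempty)
    {M : Finset (Finset (Fin 4))} (hM : Intersecting M) {K : Finset α}
    (hK : ∀ v ∈ K, f v ∈ M) {u₀ : α} (h1 : f u₀ ∈ M) (h2 : u₀ ∉ K) :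
    K.card < G.cliqueNum := by
  classical
  have hcl : G.IsClique ↑(insert u₀ K) := by
    apply clique_of_mem hadj hM
    intro v hv
    rcases Finset.mem_insert.mp hv with rfl | h
    · exact h1
    · exact hK v h
  have h3 : (insert u₀ K).card ≤ G.cliqueNum :=
    SimpleGraph.IsClique.card_le_cliqueNum (tc := hcl)
  rw [Finset.card_insert_of_notMem h2] at h3
  omega

lemma one_le_cliqueNum (v : α) : 1 ≤ G.cliqueNum := by
  have hcl : G.IsClique ↑({v} : Finset α) := by
    intro a ha b hb hne
    rw [Finset.coe_singleton, Set.mem_singleton_iff] at ha hb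
    exact absurd (ha.trans hb.symm) hne
  have h3 : ({v} : Finset α).card ≤ G.cliqueNum :=
    SimpleGraph.IsClique.card_le_cliqueNum (tc := hcl)
  simpa using h3

lemma step [Nonempty α] (h0 : ∀ v, f v ≠ ∅)
    (hadj : ∀ u v, G.Adj u v ↔ u ≠ v ∧ (f u ∩ f v).Nonempty) :
    ∃ C : Finset α, C.Nonempty ∧ (∀ u ∈ C, ∀ v ∈ C, u ≠ v → f u ∩ f v = ∅) ∧
      (∀ K : Finset α, G.IsClique ↑K → (∀ v ∈ K, v ∉ C) → K.card < G.cliqueNum) := by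
  classical
  obtain ⟨v₀⟩ := ‹Nonempty α›
  have hω1 : 1 ≤ G.cliqueNum := one_le_cliqueNum v₀
  have hclass : ∀ K : Finset α, G.IsClique ↑K →
      (∃ x, ∀ v ∈ K, f v ∈ famS x) ∨ (∃ T, T.card = 3 ∧ ∀ v ∈ K, f v ∈ famF T) ∨
      (∃ x, ∀ v ∈ K, f v ∈ famN x) := by
    intro K hK
    have h0' : ∀ A ∈ K.image f, A ≠ ∅ := by
      rintro A hA
      obtain ⟨v, hv, rfl⟩ := Finset.mem_image.mp hA
      exact h0 v
    have h1' : ∀ A ∈ K.image f, ∀ B ∈ K.image f, (A ∩ B).Nonempty := by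
      rintro A hA B hB
      obtain ⟨u, hu, rfl⟩ := Finset.mem_image.mp hA
      obtain ⟨v, hv, rfl⟩ := Finset.mem_image.mp hB
      by_cases huv : u = v
      · subst huv; rw [Finset.inter_self]; exact Finset.nonempty_iff_ne_empty.mpr (h0 u)
      · exact ((hadj u v).mp (hK (Finset.mem_coe.mpr hu) (Finset.mem_coe.mpr hv) huv)).2
    rcases classify (K.image f) h0' h1' with ⟨x,h⟩|⟨T,hT,h⟩|⟨x,h⟩
    · exact Or.inl ⟨x, fun v hv => h (Finset.mem_image_of_mem f hv)⟩
    · exact Or.inr (Or.inl ⟨T, hT, fun v hv => h (Finset.mem_image_of_mem f hv)⟩)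
    · exact Or.inr (Or.inr ⟨x, fun v hv => h (Finset.mem_image_of_mem f hv)⟩)
  by_cases h1 : ∃ v, f v = Finset.univ
  · obtain ⟨u₀, hu₀⟩ := h1
    refine ⟨{u₀}, ⟨u₀, Finset.mem_singleton_self u₀⟩, ?_, ?_⟩
    · intro u hu v hv huv
      rw [Finset.mem_singleton] at hu hv
      subst hu; subst hv; exact absurd rfl huv
    · intro K hK hKC
      have hu₀K : u₀ ∉ K := fun h => hKC u₀ h (Finset.mem_singleton_self u₀)
      rcases hclass K hK with ⟨x,h⟩|⟨T,hT,h⟩|⟨x,h⟩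
      · exact card_lt_of_hit hadj (inter_famS x) h (hu₀ ▸ univ_famS x) hu₀K
      · exact card_lt_of_hit hadj (inter_famF T hT) h (hu₀ ▸ univ_famF T hT) hu₀K
      · exact card_lt_of_hit hadj (inter_famN x) h (hu₀ ▸ univ_famN x) hu₀K
  by_cases h2 : ∃ x : Fin 4, (∃ v, f v = Finset.univ.erase x) ∧ (∃ v, f v = ({x} : Finset (Fin 4)))
  · obtain ⟨x, ⟨ut, hut⟩, ⟨us, hus⟩⟩ := h2
    have hne : ut ≠ us := fun h => erase_ne_single x (by rw [← hut, h, hus])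
    refine ⟨{ut, us}, ⟨ut, by simp⟩, ?_, ?_⟩
    · intro u hu v hv huv
      simp only [Finset.mem_insert, Finset.mem_singleton] at hu hv
      rcases hu with rfl|rfl <;> rcases hv with rfl|rfl
      · exact absurd rfl huv
      · rw [hut, hus]; exact erase_inter_single x
      · rw [hus, hut, Finset.inter_comm]; exact erase_inter_single x
      · exact absurd rfl huv
    · intro K hK hKC
      have hutK : ut ∉ K := fun h => hKC ut h (by simp)
      have husK : us ∉ K := fun h => hKC us h (by simp)
      rcases hclass K hK with ⟨p,h⟩|⟨T,hT,h⟩|⟨p,h⟩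
      · rcases D2S x p with hm|hm
        · exact card_lt_of_hit hadj (inter_famS p) h (hut ▸ hm) hutK
        · exact card_lt_of_hit hadj (inter_famS p) h (hus ▸ hm) husK
      · exact card_lt_of_hit hadj (inter_famF T hT) h (hut ▸ erase_famF x T hT) hutK
      · exact card_lt_of_hit hadj (inter_famN p) h (hut ▸ erase_famN x p) hutK
  by_cases h3 : ∃ x : Fin 4, ∃ v, f v = Finset.univ.erase x
  · obtain ⟨x, ut, hut⟩ := h3
    have hnsx : ∀ v, f v ≠ ({x} : Finset (Fin 4)) := by
      intro v hv; exact h2 ⟨x, ⟨ut, hut⟩, ⟨v, hv⟩⟩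
    refine ⟨{ut}, ⟨ut, Finset.mem_singleton_self ut⟩, ?_, ?_⟩
    · intro u hu v hv huv
      rw [Finset.mem_singleton] at hu hv
      subst hu; subst hv; exact absurd rfl huv
    · intro K hK hKC
      have hutK : ut ∉ K := fun h => hKC ut h (Finset.mem_singleton_self ut)
      rcases hclass K hK with ⟨p,h⟩|⟨T,hT,h⟩|⟨p,h⟩
      · by_cases hpx : x = p
        · subst hpx
          have h' : ∀ v ∈ K, f v ∈ famN x := fun v hv =>
            memN_of (f v) x (mem_famS.mp (h v hv)) (hnsx v)
          exact card_lt_of_hit hadj (inter_famN x) h' (hut ▸ erase_famN x x) hutK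
        · exact card_lt_of_hit hadj (inter_famS p) h (hut ▸ erase_famS x p hpx) hutK
      · exact card_lt_of_hit hadj (inter_famF T hT) h (hut ▸ erase_famF x T hT) hutK
      · exact card_lt_of_hit hadj (inter_famN p) h (hut ▸ erase_famN x p) hutK
  push_neg at h1 h3
  have hsmall : ∀ v, (f v).card ≤ 2 := fun v => Lsmall (f v) (h0 v) (h1 v) (fun x => h3 x v)
  have hpkf : ∀ (k : Fin 4) (v : α),
      v ∈ (if h : ∃ w, f w = ({k} : Finset (Fin 4)) then {h.choose} else (∅ : Finset α)) →
      f v = ({k} : Finset (Fin 4)) := by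
    intro k v hv
    by_cases h : ∃ w, f w = ({k} : Finset (Fin 4))
    · rw [dif_pos h, Finset.mem_singleton] at hv; exact hv ▸ h.choose_spec
    · rw [dif_neg h] at hv; exact absurd hv (Finset.notMem_empty v)
  have hpkuniq : ∀ (k : Fin 4) (u v : α),
      u ∈ (if h : ∃ w, f w = ({k} : Finset (Fin 4)) then {h.choose} else (∅ : Finset α)) →
      v ∈ (if h : ∃ w, f w = ({k} : Finset (Fin 4)) then {h.choose} else (∅ : Finset α)) →
      u = v := by
    intro k u v hu hv
    by_cases h : ∃ w, f w = ({k} : Finset (Fin 4))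
    · rw [dif_pos h, Finset.mem_singleton] at hu hv; rw [hu, hv]
    · rw [dif_neg h] at hu; exact absurd hu (Finset.notMem_empty u)
  have hpkself : ∀ (k : Fin 4) (h : ∃ w, f w = ({k} : Finset (Fin 4))),
      h.choose ∈ (if h' : ∃ w, f w = ({k} : Finset (Fin 4)) then {h'.choose} else (∅ : Finset α)) := by
    intro k h
    rw [dif_pos h]
    exact Finset.mem_singleton_self _
  set pk : Fin 4 → Finset α :=
    fun k => if h : ∃ w, f w = ({k} : Finset (Fin 4)) then {h.choose} else ∅ with hpk
  by_cases h4 : ∃ u w, (f u).card = 2 ∧ (f w).card = 2 ∧ f u ∩ f w = ∅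
  · obtain ⟨ue, uw, hce, hcw, hdisj⟩ := h4
    have hne : ue ≠ uw := fun h => Ldisj _ _ hce hcw hdisj (h ▸ rfl)
    refine ⟨{ue, uw}, ⟨ue, by simp⟩, ?_, ?_⟩
    · intro u hu v hv huv
      simp only [Finset.mem_insert, Finset.mem_singleton] at hu hv
      rcases hu with rfl|rfl <;> rcases hv with rfl|rfl
      · exact absurd rfl huv
      · exact hdisj
      · rw [Finset.inter_comm]; exact hdisj
      · exact absurd rfl huv
    · intro K hK hKC
      have hueK : ue ∉ K := fun h => hKC ue h (by simp)
      have huwK : uw ∉ K := fun h => hKC uw h (by simp)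
      rcases hclass K hK with ⟨p,h⟩|⟨T,hT,h⟩|⟨p,h⟩
      · rcases D4S _ _ p hce hcw hdisj with hm|hm
        exacts [card_lt_of_hit hadj (inter_famS p) h hm hueK,
                card_lt_of_hit hadj (inter_famS p) h hm huwK]
      · rcases D4F _ _ T hce hcw hdisj hT with hm|hm
        exacts [card_lt_of_hit hadj (inter_famF T hT) h hm hueK,
                card_lt_of_hit hadj (inter_famF T hT) h hm huwK]
      · rcases D4N _ _ p hce hcw hdisj with hm|hm
        exacts [card_lt_of_hit hadj (inter_famN p) h hm hueK,
                card_lt_of_hit hadj (inter_famN p) h hm huwK]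
  by_cases h5 : ∃ u, (f u).card = 2
  · obtain ⟨ue, hce⟩ := h5
    push_neg at h4
    have hnd : ∀ u w, (f u).card = 2 → (f w).card = 2 → (f u ∩ f w).Nonempty := by
      intro u w hu hw
      exact h4 u w hu hw
    set C : Finset α := insert ue ((Finset.univ \ f ue).biUnion pk) with hC
    have hmemC : ∀ v ∈ C, v = ue ∨ ∃ k, k ∉ f ue ∧ v ∈ pk k := by
      intro v hv
      rw [hC, Finset.mem_insert] at hv
      rcases hv with rfl|hv
      · exact Or.inl rfl
      · obtain ⟨k, hk, hvk⟩ := Finset.mem_biUnion.mp hv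
        exact Or.inr ⟨k, (Finset.mem_sdiff.mp hk).2, hvk⟩
    refine ⟨C, ⟨ue, by rw [hC]; exact Finset.mem_insert_self _ _⟩, ?_, ?_⟩
    · intro u hu v hv huv
      rcases hmemC u hu with rfl|⟨k,hk,hfk⟩ <;> rcases hmemC v hv with h'|⟨k',hk',hfk'⟩
      · exact absurd h'.symm huv
      · rw [hpkf k' v hfk']
        exact Finset.inter_singleton_of_notMem hk'
      · rw [h', hpkf k u hfk]
        exact Finset.singleton_inter_of_notMem hk
      · by_cases hkk : k = k'
        · subst hkk
          exact absurd (hpkuniq k u v hfk hfk') huv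
        · rw [hpkf k u hfk, hpkf k' v hfk']
          exact Finset.singleton_inter_of_notMem (by simp [hkk])
    · intro K hK hKC
      have hueC : ue ∈ C := by rw [hC]; exact Finset.mem_insert_self _ _
      have hueK : ue ∉ K := fun h => hKC ue h hueC
      have hitS : ∀ p : Fin 4, (∀ v ∈ K, p ∈ f v) → K.card < G.cliqueNum := by
        intro p hp
        by_cases hpe : p ∈ f ue
        · exact card_lt_of_hit hadj (inter_famS p) (fun v hv => mem_famS.mpr (hp v hv))
            (mem_famS.mpr hpe) hueK
        · by_cases hkp : ∃ w, f w = ({p} : Finset (Fin 4))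
          · have hch : hkp.choose ∈ C := by
              rw [hC]
              apply Finset.mem_insert_of_mem
              apply Finset.mem_biUnion.mpr
              exact ⟨p, Finset.mem_sdiff.mpr ⟨Finset.mem_univ p, hpe⟩, hpkself p hkp⟩
            have hchK : hkp.choose ∉ K := fun h => hKC _ h hch
            exact card_lt_of_hit hadj (inter_famS p) (fun v hv => mem_famS.mpr (hp v hv))
              (by rw [hkp.choose_spec]; exact single_famS p) hchK
          · push_neg at hkp
            obtain ⟨hef, hc3⟩ := D4b2 (f ue) p hce hpe
            have h' : ∀ v ∈ K, f v ∈ famF (insert p (f ue)) := by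
              intro v hv
              by_cases hfv1 : (f v).card = 2
              · refine D4b1 (f v) (f ue) p hpe hce (hp v hv) (hsmall v) ?_ (hnd v ue hfv1 hce)
                intro hh
                rw [hh] at hfv1
                simp at hfv1
              · have hc1 : (f v).card = 1 := by
                  have h2 := hsmall v
                  have hpos : 0 < (f v).card := Finset.card_pos.mpr ⟨p, hp v hv⟩
                  omega
                exact absurd (singleton_eq (f v) p hc1 (hp v hv)) (hkp v)
            exact card_lt_of_hit hadj (inter_famF _ hc3) h' hef hueK
      rcases hclass K hK with ⟨p,h⟩|⟨T,hT,h⟩|⟨p,h⟩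
      · exact hitS p (fun v hv => mem_famS.mp (h v hv))
      · by_cases heT : f ue ∈ famF T
        · exact card_lt_of_hit hadj (inter_famF T hT) h heT hueK
        · obtain ⟨xx, hxe, hxeq⟩ := D4b3 (f ue) T hce hT heT
          apply hitS xx
          intro v hv
          obtain ⟨hsubT, hcv⟩ := Dsub (f v) T (hsmall v) (h v hv)
          obtain ⟨z, hz⟩ := hnd v ue hcv hce
          rw [Finset.mem_inter] at hz
          have hz2 : z ∈ f ue ∩ T := Finset.mem_inter.mpr ⟨hz.2, hsubT hz.1⟩
          rw [hxeq, Finset.mem_singleton] at hz2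
          exact hz2 ▸ hz.1
      · exact hitS p (fun v hv => mem_famN_small (f v) p (hsmall v) (h v hv))
  · push_neg at h5
    have hall : ∀ v, (f v).card = 1 := by
      intro v
      have h2 := hsmall v
      have hpos : 0 < (f v).card :=
        Finset.card_pos.mpr (Finset.nonempty_iff_ne_empty.mpr (h0 v))
      have := h5 v
      omega
    set C : Finset α := Finset.univ.biUnion pk with hC
    have hmemC : ∀ v ∈ C, ∃ k, v ∈ pk k := by
      intro v hv
      rw [hC] at hv
      obtain ⟨k, _, hvk⟩ := Finset.mem_biUnion.mp hv
      exact ⟨k, hvk⟩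
    have hCne : C.Nonempty := by
      obtain ⟨k0, hk0⟩ := Finset.card_eq_one.mp (hall v₀)
      have hx : ∃ w, f w = ({k0} : Finset (Fin 4)) := ⟨v₀, hk0⟩
      refine ⟨hx.choose, ?_⟩
      rw [hC]
      apply Finset.mem_biUnion.mpr
      exact ⟨k0, Finset.mem_univ k0, hpkself k0 hx⟩
    refine ⟨C, hCne, ?_, ?_⟩
    · intro u hu v hv huv
      obtain ⟨k, hfk⟩ := hmemC u hu
      obtain ⟨k', hfk'⟩ := hmemC v hv
      by_cases hkk : k = k'
      · subst hkk
        exact absurd (hpkuniq k u v hfk hfk') huv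
      · rw [hpkf k u hfk, hpkf k' v hfk']
        exact Finset.singleton_inter_of_notMem (by simp [hkk])
    · intro K hK hKC
      have hKe : ∀ (hempty : ∀ v ∈ K, False), K.card < G.cliqueNum := by
        intro hempty
        have : K = ∅ := Finset.eq_empty_iff_forall_notMem.mpr (fun v hv => hempty v hv)
        rw [this, Finset.card_empty]
        omega
      rcases hclass K hK with ⟨p,h⟩|⟨T,hT,h⟩|⟨p,h⟩
      · by_cases hkp : ∃ w, f w = ({p} : Finset (Fin 4))
        · have hch : hkp.choose ∈ C := by
            rw [hC]
            apply Finset.mem_biUnion.mpr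
            exact ⟨p, Finset.mem_univ p, hpkself p hkp⟩
          have hchK : hkp.choose ∉ K := fun hh => hKC _ hh hch
          exact card_lt_of_hit hadj (inter_famS p) h
            (by rw [hkp.choose_spec]; exact single_famS p) hchK
        · apply hKe
          intro v hv
          exact hkp ⟨v, singleton_eq (f v) p (hall v) (mem_famS.mp (h v hv))⟩
      · apply hKe
        intro v hv
        exact card1_famF (f v) T (le_of_eq (hall v)) (h v hv)
      · apply hKe
        intro v hv
        exact card1_famN (f v) p (le_of_eq (hall v)) (h v hv)


end Tools

theorem key : ∀ (N : ℕ) (α : Type u) [Fintype α] (G : SimpleGraph α) (f : α → Finset (Fin 4)),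
    Fintype.card α ≤ N → (∀ v, f v ≠ ∅) →
    (∀ u v, G.Adj u v ↔ u ≠ v ∧ (f u ∩ f v).Nonempty) → G.Colorable G.cliqueNum := by
  intro N
  induction N with
  | zero =>
    intro α _ G f hcard h0 hadj
    haveI : IsEmpty α := Fintype.card_eq_zero_iff.mp (le_antisymm hcard (Nat.zero_le _))
    exact SimpleGraph.Colorable.of_isEmpty (G := G) _
  | succ N ih =>
    intro α _ G f hcard h0 hadj
    classical
    by_cases hemp : IsEmpty α
    · exact SimpleGraph.Colorable.of_isEmpty (G := G) _
    haveI hne : Nonempty α := not_isEmpty_iff.mp hemp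
    obtain ⟨C, hCne, hCstab, hChit⟩ := step h0 hadj
    set s' : Set α := {v | v ∉ C} with hs'
    have hadj' : ∀ u v : ↥s', (G.induce s').Adj u v ↔
        u ≠ v ∧ ((f u.1) ∩ (f v.1)).Nonempty := by
      intro u v
      rw [SimpleGraph.comap_adj, hadj]
      constructor
      · rintro ⟨h1, h2⟩
        exact ⟨fun h => h1 (congrArg Subtype.val h), h2⟩
      · rintro ⟨h1, h2⟩
        exact ⟨fun h => h1 (Subtype.ext h), h2⟩
    have hcard' : Fintype.card ↥s' ≤ N := by
      obtain ⟨c0, hc0⟩ := hCne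
      have hlt : Fintype.card ↥s' < Fintype.card α :=
        Fintype.card_subtype_lt (p := fun v => v ∉ C) (x := c0) (by simpa using hc0)
      omega
    have hcol' := ih ↥s' (G.induce s') (fun v => f v.1) hcard' (fun v => h0 v.1) hadj'
    have hbound : (G.induce s').cliqueNum ≤ G.cliqueNum - 1 := by
      obtain ⟨K', hK'⟩ := SimpleGraph.exists_isNClique_cliqueNum (G := G.induce s')
      set K : Finset α := K'.map (Function.Embedding.subtype _) with hKdef
      have hKcl : G.IsClique ↑K := by
        intro u hu v hv huv
        rw [Finset.mem_coe, hKdef, Finset.mem_map] at hu hv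
        obtain ⟨u', hu', rfl⟩ := hu
        obtain ⟨v', hv', rfl⟩ := hv
        have : (G.induce s').Adj u' v' :=
          hK'.isClique (Finset.mem_coe.mpr hu') (Finset.mem_coe.mpr hv')
            (fun h => huv (congrArg _ h))
        exact this
      have hKavoid : ∀ v ∈ K, v ∉ C := by
        intro v hv
        rw [hKdef, Finset.mem_map] at hv
        obtain ⟨v', _, rfl⟩ := hv
        exact v'.2
      have hlt := hChit K hKcl hKavoid
      rw [hKdef, Finset.card_map, hK'.card_eq] at hlt
      omega
    have hω1 : 1 ≤ G.cliqueNum := one_le_cliqueNum (Classical.arbitrary α)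
    obtain ⟨c'⟩ := hcol'.mono hbound
    have hsucc : G.cliqueNum - 1 + 1 = G.cliqueNum := by omega
    have co : G.Coloring (Fin (G.cliqueNum - 1 + 1)) := by
      refine SimpleGraph.Coloring.mk
        (fun v => if h : v ∈ C then Fin.last _ else (c' ⟨v, h⟩).castSucc) ?_
      intro u v huv
      by_cases h1 : u ∈ C <;> by_cases h2 : v ∈ C
      · exfalso
        obtain ⟨hne', hnon⟩ := (hadj u v).mp huv
        rw [hCstab u h1 v h2 hne'] at hnon
        exact Finset.not_nonempty_empty hnon
      · rw [dif_pos h1, dif_neg h2]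
        exact (Fin.castSucc_lt_last _).ne'
      · rw [dif_neg h1, dif_pos h2]
        exact (Fin.castSucc_lt_last _).ne
      · rw [dif_neg h1, dif_neg h2]
        intro hh
        have hadj'' : (G.induce s').Adj ⟨u, h1⟩ ⟨v, h2⟩ := huv
        exact c'.valid hadj'' (Fin.castSucc_injective _ hh)
    exact ⟨hsucc ▸ co⟩

lemma cliqueNum_le_chrom {α : Type*} [Fintype α] (G : SimpleGraph α) :
    (G.cliqueNum : ℕ∞) ≤ G.chromaticNumber := by
  obtain ⟨K, hK⟩ := SimpleGraph.exists_isNClique_cliqueNum (G := G)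
  have hcol := SimpleGraph.colorable_chromaticNumber_of_fintype G
  have hle : G.cliqueNum ≤ ENat.toNat G.chromaticNumber := by
    rw [← hK.card_eq]
    exact hK.isClique.card_le_of_colorable hcol
  have hnet : G.chromaticNumber ≠ ⊤ :=
    SimpleGraph.chromaticNumber_ne_top_iff_exists.mpr ⟨_, G.colorable_of_fintype⟩
  calc (G.cliqueNum : ℕ∞) ≤ (ENat.toNat G.chromaticNumber : ℕ∞) := Nat.cast_le.mpr hle
    _ = G.chromaticNumber := ENat.coe_toNat hnet



open Finset in
private def P5 (p : Fin 5) : Finset (Fin 5) := {p, p + 1}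

section Part1
set_option linter.unusedSectionVars false
open SimpleGraph
variable {F V : Type*} [Field F] [AddCommGroup V] [Module F V]
  {n : ℕ} (B : Module.Basis (Fin n) F V)

lemma part1 (hn5 : 5 ≤ n) : ¬ IsPerfect (compGraph B) := by
  set ι : Fin 5 → Fin n := Fin.castLE hn5 with hι
  have hιinj : Function.Injective ι := Fin.castLE_injective hn5
  -- the five vectors
  set x : Fin 5 → V := fun p => B (ι p) + B (ι (p + 1)) with hx
  have hne1 : ∀ p : Fin 5, p ≠ p + 1 := by decide
  have coordEval : ∀ (a b : Fin n) (i : Fin n),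
      B.repr (B a + B b) i = (if a = i then (1:F) else 0) + (if b = i then (1:F) else 0) := by
    intro a b i
    simp [map_add, Module.Basis.repr_self, Finsupp.single_apply]
  have reprx : ∀ (p : Fin 5) (a : Fin 5),
      B.repr (x p) (ι a) = if a ∈ P5 p then (1:F) else 0 := by
    intro p a
    rw [hx, coordEval]
    by_cases h1 : a = p
    · subst h1
      rw [if_pos rfl, if_neg (fun h => (hne1 a) (hιinj h).symm), if_pos (by simp [P5])]
      ring
    · by_cases h2 : a = p + 1
      · subst h2
        rw [if_neg (fun h => (hne1 p) (hιinj h)), if_pos rfl, if_pos (by simp [P5])]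
        ring
      · rw [if_neg (fun h => h1 (hιinj h).symm), if_neg (fun h => h2 (hιinj h).symm),
          if_neg (by simp [P5, h1, h2])]
        ring
  have hx0 : ∀ p : Fin 5, x p ≠ 0 := by
    intro p hp
    have := reprx p p
    rw [hp, if_pos (by simp [P5])] at this
    simp at this
  have hmemskel : ∀ (p : Fin 5) (i : Fin n), i ∈ skel B (x p) ↔ ∃ a ∈ P5 p, ι a = i := by
    intro p i
    constructor
    · intro hi
      have h := hi
      rw [skel, Set.mem_setOf_eq, hx, coordEval] at h
      by_cases h1 : ι p = i
      · exact ⟨p, by simp [P5], h1⟩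
      · by_cases h2 : ι (p+1) = i
        · exact ⟨p+1, by simp [P5], h2⟩
        · exfalso; apply h; rw [if_neg h1, if_neg h2]; ring
    · rintro ⟨a, ha, rfl⟩
      rw [skel, Set.mem_setOf_eq, reprx, if_pos ha]
      exact one_ne_zero
  have hinter : ∀ p q : Fin 5,
      (skel B (x p) ∩ skel B (x q)).Nonempty ↔ (P5 p ∩ P5 q).Nonempty := by
    intro p q
    constructor
    · rintro ⟨i, hip, hiq⟩
      obtain ⟨a, ha, rfl⟩ := (hmemskel p i).mp hip
      obtain ⟨b, hb, hab⟩ := (hmemskel q _).mp hiq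
      exact ⟨a, Finset.mem_inter.mpr ⟨ha, (hιinj hab) ▸ hb⟩⟩
    · rintro ⟨a, ha⟩
      rw [Finset.mem_inter] at ha
      exact ⟨ι a, (hmemskel p _).mpr ⟨a, ha.1, rfl⟩, (hmemskel q _).mpr ⟨a, ha.2, rfl⟩⟩
  have hxne : ∀ p q : Fin 5, p ≠ q → x p ≠ x q := by
    intro p q hpq heq
    obtain ⟨a, hap, haq⟩ : ∃ a, a ∈ P5 p ∧ a ∉ P5 q :=
      (by decide : ∀ p q : Fin 5, p ≠ q → ∃ a, a ∈ P5 p ∧ a ∉ P5 q) p q hpq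
    have h1 := reprx p a
    have h2 := reprx q a
    rw [heq, h2, if_neg haq] at h1
    rw [if_pos hap] at h1
    exact one_ne_zero h1.symm
  -- the vertex set
  set X : Fin 5 → {a : V // a ≠ 0} := fun p => ⟨x p, hx0 p⟩ with hX
  set s : Set {a : V // a ≠ 0} := Set.range X with hs
  have hadjP : ∀ p q : Fin 5, (compGraph B).Adj (X p) (X q) → (P5 p ∩ P5 q).Nonempty := by
    intro p q h
    exact (hinter p q).mp h.2
  have hadj_consec : ∀ p : Fin 5, (compGraph B).Adj (X p) (X (p + 1)) := by
    intro p
    exact ⟨fun h => hxne p (p+1) (hne1 p) (congrArg Subtype.val h), (hinter _ _).mpr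
      ((by decide : ∀ p : Fin 5, (P5 p ∩ P5 (p+1)).Nonempty) p)⟩
  have hXinj : Function.Injective X := by
    intro p q h
    by_contra hpq
    exact hxne p q hpq (congrArg Subtype.val h)
  intro hperf
  have hperfs := hperf s
  -- clique number ≤ 2
  have hclique : ((compGraph B).induce s).cliqueNum ≤ 2 := by
    rw [SimpleGraph.cliqueNum]
    have h00 : (0:ℕ) ∈ {m | ∃ K, ((compGraph B).induce s).IsNClique m K} :=
      ⟨∅, isNClique_empty.mpr rfl⟩
    apply csSup_le ⟨0, h00⟩
    rintro m ⟨K, hK⟩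
    by_contra hm
    rw [← hK.card_eq] at hm
    obtain ⟨a, b, c, ha, hb, hc, hab, hac, hbc⟩ :=
      (Finset.two_lt_card_iff (s := K)).mp (by omega)
    obtain ⟨p, hp⟩ := a.2
    obtain ⟨q, hq⟩ := b.2
    obtain ⟨r, hr⟩ := c.2
    have hpq : p ≠ q := fun h => hab (Subtype.ext (hp ▸ hq ▸ h ▸ rfl))
    have hpr : p ≠ r := fun h => hac (Subtype.ext (hp ▸ hr ▸ h ▸ rfl))
    have hqr : q ≠ r := fun h => hbc (Subtype.ext (hq ▸ hr ▸ h ▸ rfl))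
    have h1 : (compGraph B).Adj (X p) (X q) := by
      have := hK.isClique (Finset.mem_coe.mpr ha) (Finset.mem_coe.mpr hb) hab
      rw [hp, hq]; exact this
    have h2 : (compGraph B).Adj (X q) (X r) := by
      have := hK.isClique (Finset.mem_coe.mpr hb) (Finset.mem_coe.mpr hc) hbc
      rw [hq, hr]; exact this
    have h3 : (compGraph B).Adj (X p) (X r) := by
      have := hK.isClique (Finset.mem_coe.mpr ha) (Finset.mem_coe.mpr hc) hac
      rw [hp, hr]; exact this
    have i1 := hadjP _ _ h1
    have i2 := hadjP _ _ h2
    have i3 := hadjP _ _ h3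
    exact (by decide : ∀ p q r : Fin 5, p ≠ q → p ≠ r → q ≠ r →
        (P5 p ∩ P5 q).Nonempty → (P5 q ∩ P5 r).Nonempty → (P5 p ∩ P5 r).Nonempty → False)
      p q r hpq hpr hqr i1 i2 i3
  -- 2-colorable
  have hcol2 : ((compGraph B).induce s).Colorable 2 := by
    rw [← SimpleGraph.chromaticNumber_le_iff_colorable, hperfs]
    exact_mod_cast Nat.cast_le.mpr hclique
  obtain ⟨c⟩ := hcol2
  have hcyc : ∀ p : Fin 5, c ⟨X p, Set.mem_range_self p⟩ ≠ c ⟨X (p+1), Set.mem_range_self (p+1)⟩ := by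
    intro p
    exact c.valid (hadj_consec p)
  exact (by decide : ∀ g : Fin 5 → Fin 2, ¬ ∀ p : Fin 5, g p ≠ g (p+1))
    (fun p => c ⟨X p, Set.mem_range_self p⟩) hcyc

end Part1

lemma part2 {F V : Type*} [Field F] [Fintype F] [AddCommGroup V] [Module F V]
    {n : ℕ} (hn4 : n ≤ 4) (B : Module.Basis (Fin n) F V) : IsPerfect (compGraph B) := by
  classical
  haveI : Finite V := Finite.of_equiv _ (B.repr.toEquiv.trans Finsupp.equivFunOnFinite).symm
  intro s
  haveI : Fintype ↥s := Fintype.ofFinite _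
  have hskel : ∀ a : V, skel B a = ↑((B.repr a).support) := by
    intro a
    ext i
    simp [skel, Finsupp.mem_support_iff]
  have hιinj : Function.Injective (Fin.castLE hn4) := Fin.castLE_injective hn4
  have h0' : ∀ v : ↥s, ((B.repr v.1.1).support).image (Fin.castLE hn4) ≠ ∅ := by
    intro v hv
    rw [Finset.image_eq_empty, Finsupp.support_eq_empty] at hv
    exact v.1.2 (B.repr.map_eq_zero_iff.mp hv)
  have hadj' : ∀ u v : ↥s, ((compGraph B).induce s).Adj u v ↔ u ≠ v ∧
      (((B.repr u.1.1).support).image (Fin.castLE hn4) ∩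
        ((B.repr v.1.1).support).image (Fin.castLE hn4)).Nonempty := by
    intro u v
    rw [SimpleGraph.comap_adj]
    show (u.1 ≠ v.1 ∧ (skel B u.1.1 ∩ skel B v.1.1).Nonempty) ↔ _
    rw [hskel, hskel]
    constructor
    · rintro ⟨hne, hint⟩
      refine ⟨fun h => hne (congrArg Subtype.val h), ?_⟩
      rw [← Finset.coe_inter] at hint
      have h2 : ((B.repr u.1.1).support ∩ (B.repr v.1.1).support).Nonempty :=
        Finset.coe_nonempty.mp hint
      rw [← Finset.image_inter _ _ hιinj]
      exact h2.image _
    · rintro ⟨hne, hint⟩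
      refine ⟨fun h => hne (Subtype.ext h), ?_⟩
      rw [← Finset.image_inter _ _ hιinj] at hint
      have h2 := Finset.image_nonempty.mp hint
      rw [← Finset.coe_inter]
      exact Finset.coe_nonempty.mpr h2
  have hcol := key (Fintype.card ↥s) ↥s ((compGraph B).induce s)
      (fun v => ((B.repr v.1.1).support).image (Fin.castLE hn4)) le_rfl h0' hadj'
  refine le_antisymm ?_ (cliqueNum_le_chrom _)
  exact_mod_cast hcol.chromaticNumber_le

end NZCG
set_option maxHeartbeats 200000

/-- For a finite dimensional vector space `V` over a finite field `F`
with basis `B`, the nonzero component graph `IG(V)` is perfect iff `dim V ≤ 4`. -/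
theorem stmt10 {F V : Type*} [Field F] [Fintype F] [AddCommGroup V] [Module F V]
    {n : ℕ} (hn : 1 ≤ n) (B : Module.Basis (Fin n) F V) :
    IsPerfect (compGraph B) ↔ n ≤ 4 := by
  constructor
  · intro hperf
    by_contra hgt
    push_neg at hgt
    exact NZCG.part1 B (by omega) hperf
  · intro h4
    exact NZCG.part2 h4 B
end
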